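/- Let g be a flat metric on a connected open set U ⊆ ℝⁿ (n ≥ 2), let L be geodesically compatible with g and non-degenerate, and let K ∈ ℝ be the constant curvature of the metric gL⁻¹. Then λ = ½ tr L satisfies ∇^i∇_j λ + K δ^i_j = 0 on U, where ∇^i∇_j λ = g^{is}(∂_s∂_j λ − Γ^r_{sj} ∂_r λ). -/

import Mathlib

open scoped BigOperators

/-- Partial derivative `∂_k f` at `x`. -/
noncomputable def pd {n : ℕ} (f : (Fin n → ℝ) → ℝ) (k : Fin n) (x : Fin n → ℝ) : ℝ :=
  fderiv ℝ f x (Pi.single k 1)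

/-- Christoffel symbols `Γ^i_{jk}` of a metric `g`. -/
noncomputable def Christoffel {n : ℕ} (g : (Fin n → ℝ) → Matrix (Fin n) (Fin n) ℝ)
    (i j k : Fin n) (x : Fin n → ℝ) : ℝ :=
  (1 / 2) * ∑ s, (g x)⁻¹ i s *
    (pd (fun y => g y s k) j x + pd (fun y => g y s j) k x - pd (fun y => g y j k) s x)

/-- Curvature tensor `R^l_{ijk}` of a metric `g`. -/
noncomputable def Curv {n : ℕ} (g : (Fin n → ℝ) → Matrix (Fin n) (Fin n) ℝ)
    (l i j k : Fin n) (x : Fin n → ℝ) : ℝ :=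
  pd (Christoffel g l i k) j x - pd (Christoffel g l i j) k x
    + ∑ s, (Christoffel g l j s x * Christoffel g s i k x
        - Christoffel g l k s x * Christoffel g s i j x)

/-- `g` is a (smooth pseudo-Riemannian) metric on `U`. -/
def IsMetricOn {n : ℕ} (g : (Fin n → ℝ) → Matrix (Fin n) (Fin n) ℝ)
    (U : Set (Fin n → ℝ)) : Prop :=
  (∀ i j, ContDiffOn ℝ (⊤ : ℕ∞) (fun x => g x i j) U) ∧
    (∀ x ∈ U, (g x).IsSymm) ∧ ∀ x ∈ U, (g x).det ≠ 0

/-- The metric `g` is flat on `U`. -/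
def IsFlatOn {n : ℕ} (g : (Fin n → ℝ) → Matrix (Fin n) (Fin n) ℝ)
    (U : Set (Fin n → ℝ)) : Prop :=
  ∀ x ∈ U, ∀ l i j k : Fin n, Curv g l i j k x = 0

/-- The metric `g` has constant curvature `K` on `U`:
`g^{js} R^i_{skm} = K (δ^i_k δ^j_m − δ^i_m δ^j_k)`. -/
def HasConstCurvOn {n : ℕ} (g : (Fin n → ℝ) → Matrix (Fin n) (Fin n) ℝ)
    (U : Set (Fin n → ℝ)) (K : ℝ) : Prop :=
  ∀ x ∈ U, ∀ i j k m : Fin n,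
    (∑ s, (g x)⁻¹ j s * Curv g i s k m x)
      = K * ((if i = k then (1:ℝ) else 0) * (if j = m then (1:ℝ) else 0)
          - (if i = m then (1:ℝ) else 0) * (if j = k then (1:ℝ) else 0))

/-- `λ = ½ tr L`. -/
noncomputable def lamL {n : ℕ} (L : (Fin n → ℝ) → Matrix (Fin n) (Fin n) ℝ)
    (x : Fin n → ℝ) : ℝ :=
  (1 / 2) * ∑ i, L x i i

/-- `L_{ij} = L^s_i g_{sj}`. -/
noncomputable def lowL {n : ℕ} (g L : (Fin n → ℝ) → Matrix (Fin n) (Fin n) ℝ)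
    (x : Fin n → ℝ) (i j : Fin n) : ℝ :=
  ∑ s, L x s i * g x s j

/-- `∇_k L_{ij} = ∂_k L_{ij} − Γ^s_{ki} L_{sj} − Γ^s_{kj} L_{is}`. -/
noncomputable def covL {n : ℕ} (g L : (Fin n → ℝ) → Matrix (Fin n) (Fin n) ℝ)
    (k i j : Fin n) (x : Fin n → ℝ) : ℝ :=
  pd (fun y => lowL g L y i j) k x
    - ∑ s, Christoffel g s k i x * lowL g L x s j
    - ∑ s, Christoffel g s k j x * lowL g L x i s

/-- `L` is geodesically compatible with `g` on `U`: it is smooth, `L_{ij}` is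
symmetric, and `∇_k L_{ij} = λ_i g_{jk} + λ_j g_{ik}` with `λ = ½ tr L`. -/
def GeodCompatOn {n : ℕ} (g L : (Fin n → ℝ) → Matrix (Fin n) (Fin n) ℝ)
    (U : Set (Fin n → ℝ)) : Prop :=
  (∀ i j, ContDiffOn ℝ (⊤ : ℕ∞) (fun x => L x i j) U) ∧
    (∀ x ∈ U, ∀ i j, lowL g L x i j = lowL g L x j i) ∧
    ∀ x ∈ U, ∀ k i j, covL g L k i j x
      = pd (lamL L) i x * g x j k + pd (lamL L) j x * g x i k

/-- `h` is a Casimir of the constant-curvature (curvature `K`) metric `g`: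
`g^{is} (∂_s ∂_j h − Γ^r_{sj} ∂_r h) + K h δ^i_j = 0`. -/
def IsCasimirOn {n : ℕ} (g : (Fin n → ℝ) → Matrix (Fin n) (Fin n) ℝ) (K : ℝ)
    (U : Set (Fin n → ℝ)) (h : (Fin n → ℝ) → ℝ) : Prop :=
  ContDiffOn ℝ (⊤ : ℕ∞) h U ∧
    ∀ x ∈ U, ∀ i j : Fin n,
      (∑ s, (g x)⁻¹ i s * (pd (pd h j) s x - ∑ r, Christoffel g r s j x * pd h r x))
        + K * h x * (if i = j then (1:ℝ) else 0) = 0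



variable {n : ℕ}

lemma pd_congr_nhds {f h : (Fin n → ℝ) → ℝ} {x : Fin n → ℝ} (hfh : f =ᶠ[nhds x] h) (k : Fin n) :
    pd f k x = pd h k x := by
  unfold pd; rw [hfh.fderiv_eq]

lemma pd_congr {U : Set (Fin n → ℝ)} (hUo : IsOpen U) {x : Fin n → ℝ} (hx : x ∈ U)
    {f h : (Fin n → ℝ) → ℝ} (hfh : ∀ y ∈ U, f y = h y) (k : Fin n) :
    pd f k x = pd h k x := by
  apply pd_congr_nhds
  filter_upwards [hUo.mem_nhds hx] with y hy using hfh y hy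

lemma pd_const (c : ℝ) (k : Fin n) (x : Fin n → ℝ) : pd (fun _ => c) k x = 0 := by
  unfold pd; rw [fderiv_fun_const]; simp

lemma pd_sub {f h : (Fin n → ℝ) → ℝ} {x : Fin n → ℝ} (hf : DifferentiableAt ℝ f x)
    (hh : DifferentiableAt ℝ h x) (k : Fin n) :
    pd (fun y => f y - h y) k x = pd f k x - pd h k x := by
  unfold pd; rw [fderiv_fun_sub hf hh]; simp

lemma pd_mul {f h : (Fin n → ℝ) → ℝ} {x : Fin n → ℝ} (hf : DifferentiableAt ℝ f x)
    (hh : DifferentiableAt ℝ h x) (k : Fin n) :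
    pd (fun y => f y * h y) k x = pd f k x * h x + f x * pd h k x := by
  unfold pd; rw [fderiv_fun_mul hf hh]; simp; ring

lemma pd_sum {ι : Type*} (s : Finset ι) {F : ι → (Fin n → ℝ) → ℝ} {x : Fin n → ℝ}
    (hF : ∀ i ∈ s, DifferentiableAt ℝ (F i) x) (k : Fin n) :
    pd (fun y => ∑ i ∈ s, F i y) k x = ∑ i ∈ s, pd (F i) k x := by
  unfold pd
  rw [fderiv_fun_sum hF]
  simp

lemma ContDiffAt.pd {f : (Fin n → ℝ) → ℝ} {x : Fin n → ℝ}
    (hf : ContDiffAt ℝ (⊤ : ℕ∞) f x) (k : Fin n) : ContDiffAt ℝ (⊤ : ℕ∞) (pd f k) x := by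
  have h1 : ContDiffAt ℝ (⊤ : ℕ∞) (fderiv ℝ f) x := hf.fderiv_right (by simp)
  have h2 : ContDiffAt ℝ (⊤ : ℕ∞) (fun y => (fderiv ℝ f y) (Pi.single k 1)) x := by
    exact (ContinuousLinearMap.apply ℝ ℝ (Pi.single k 1 : Fin n → ℝ)).contDiff.contDiffAt.comp x h1
  exact h2

lemma ContDiffAt.diffAt {f : (Fin n → ℝ) → ℝ} {x : Fin n → ℝ}
    (hf : ContDiffAt ℝ (⊤ : ℕ∞) f x) : DifferentiableAt ℝ f x :=
  hf.differentiableAt (by simp)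

lemma pd_comm {f : (Fin n → ℝ) → ℝ} {x : Fin n → ℝ} (hf : ContDiffAt ℝ (⊤ : ℕ∞) f x)
    (j k : Fin n) : pd (pd f j) k x = pd (pd f k) j x := by
  have hs : IsSymmSndFDerivAt ℝ f x := hf.isSymmSndFDerivAt (by rw [minSmoothness_of_isRCLikeNormedField]; exact WithTop.coe_le_coe.mpr (le_top : (2 : ℕ∞) ≤ ⊤))
  have hd : DifferentiableAt ℝ (fderiv ℝ f) x :=
    (hf.fderiv_right (m := (⊤ : ℕ∞)) ((by simp))).differentiableAt (by simp)
  have key : ∀ a b : Fin n,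
      pd (pd f a) b x = fderiv ℝ (fderiv ℝ f) x (Pi.single b 1) (Pi.single a 1) := by
    intro a b
    unfold pd
    rw [fderiv_clm_apply hd (differentiableAt_const (Pi.single a 1 : Fin n → ℝ))]
    simp
  rw [key j k, key k j]
  exact hs _ _
section part2
variable {n : ℕ}

-- delta helpers
lemma sum_mul_delta (f : Fin n → ℝ) (j : Fin n) :
    ∑ s, f s * (if s = j then (1:ℝ) else 0) = f j := by
  simp [mul_ite]

lemma sum_delta_mul (f : Fin n → ℝ) (j : Fin n) :
    ∑ s, (if j = s then (1:ℝ) else 0) * f s = f j := by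
  simp [ite_mul]

lemma contDiffAt_finset_prod {ι : Type*} [DecidableEq ι] (s : Finset ι)
    {F : ι → (Fin n → ℝ) → ℝ} {x : Fin n → ℝ}
    (hF : ∀ i ∈ s, ContDiffAt ℝ (⊤ : ℕ∞) (F i) x) :
    ContDiffAt ℝ (⊤ : ℕ∞) (fun y => ∏ i ∈ s, F i y) x := by
  classical
  induction s using Finset.cons_induction with
  | empty => simpa using contDiffAt_const (c := (1:ℝ))
  | cons a t hat ih =>
    simp only [Finset.prod_cons]
    exact (hF a (Finset.mem_cons_self a t)).mul
      (ih fun i hi => hF i (Finset.mem_cons_of_mem hi))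

lemma contDiffAt_finset_sum {ι : Type*} (s : Finset ι)
    {F : ι → (Fin n → ℝ) → ℝ} {x : Fin n → ℝ}
    (hF : ∀ i ∈ s, ContDiffAt ℝ (⊤ : ℕ∞) (F i) x) :
    ContDiffAt ℝ (⊤ : ℕ∞) (fun y => ∑ i ∈ s, F i y) x := by
  classical
  induction s using Finset.cons_induction with
  | empty => simpa using contDiffAt_const (c := (0:ℝ))
  | cons a t hat ih =>
    simp only [Finset.sum_cons]
    exact (hF a (Finset.mem_cons_self a t)).add
      (ih fun i hi => hF i (Finset.mem_cons_of_mem hi))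

lemma contDiffAt_det {A : (Fin n → ℝ) → Matrix (Fin n) (Fin n) ℝ} {x : Fin n → ℝ}
    (hA : ∀ i j, ContDiffAt ℝ (⊤ : ℕ∞) (fun y => A y i j) x) :
    ContDiffAt ℝ (⊤ : ℕ∞) (fun y => (A y).det) x := by
  have : (fun y => (A y).det)
      = fun y => ∑ σ : Equiv.Perm (Fin n),
          (((Equiv.Perm.sign σ : ℤ) : ℝ)) * ∏ i, A y (σ i) i := by
    funext y; rw [Matrix.det_apply']
  rw [this]
  apply contDiffAt_finset_sum
  intro σ _
  exact (contDiffAt_const).mul (contDiffAt_finset_prod _ fun i _ => hA (σ i) i)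

lemma contDiffAt_inv_entry {A : (Fin n → ℝ) → Matrix (Fin n) (Fin n) ℝ} {x : Fin n → ℝ}
    (hA : ∀ i j, ContDiffAt ℝ (⊤ : ℕ∞) (fun y => A y i j) x)
    (hdet : (A x).det ≠ 0) (i j : Fin n) :
    ContDiffAt ℝ (⊤ : ℕ∞) (fun y => (A y)⁻¹ i j) x := by
  have heq : (fun y => (A y)⁻¹ i j)
      = fun y => ((A y).det)⁻¹ * (A y).adjugate i j := by
    funext y
    rw [Matrix.inv_def, Matrix.smul_apply, Ring.inverse_eq_inv', smul_eq_mul]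
  rw [heq]
  refine ((contDiffAt_det hA).inv hdet).mul ?_
  have hadj : (fun y => (A y).adjugate i j)
      = fun y => ((A y).updateRow j (Pi.single i 1)).det := by
    funext y; rw [Matrix.adjugate_apply]
  rw [hadj]
  apply contDiffAt_det
  intro a b
  by_cases haj : a = j
  · subst haj
    simp only [Matrix.updateRow_self]
    exact contDiffAt_const
  · have : (fun y => ((A y).updateRow j (Pi.single i 1)) a b) = fun y => A y a b := by
      funext y; rw [Matrix.updateRow_ne haj]
    rw [this]; exact hA a b

end part2

section part3
variable {n : ℕ} {U : Set (Fin n → ℝ)}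

lemma inv_mul_entry {A : Matrix (Fin n) (Fin n) ℝ} (hdet : A.det ≠ 0) (i j : Fin n) :
    ∑ s, A⁻¹ i s * A s j = (if i = j then (1:ℝ) else 0) := by
  have h := Matrix.nonsing_inv_mul A (isUnit_iff_ne_zero.2 hdet)
  have h2 := congrFun (congrFun h i) j
  simpa [Matrix.mul_apply, Matrix.one_apply] using h2

lemma mul_inv_entry {A : Matrix (Fin n) (Fin n) ℝ} (hdet : A.det ≠ 0) (i j : Fin n) :
    ∑ s, A i s * A⁻¹ s j = (if i = j then (1:ℝ) else 0) := by
  have h := Matrix.mul_nonsing_inv A (isUnit_iff_ne_zero.2 hdet)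
  have h2 := congrFun (congrFun h i) j
  simpa [Matrix.mul_apply, Matrix.one_apply] using h2

lemma pd_inv_entry (hUo : IsOpen U) {A : (Fin n → ℝ) → Matrix (Fin n) (Fin n) ℝ}
    (hA : ∀ i j, ContDiffOn ℝ (⊤ : ℕ∞) (fun y => A y i j) U)
    (hdet : ∀ y ∈ U, (A y).det ≠ 0) {x : Fin n → ℝ} (hx : x ∈ U) (i j k : Fin n) :
    pd (fun y => (A y)⁻¹ i j) k x
      = -∑ a, ∑ b, (A x)⁻¹ i a * pd (fun y => A y a b) k x * (A x)⁻¹ b j := by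
  have hAat : ∀ (y) (_ : y ∈ U) (a b : Fin n), ContDiffAt ℝ (⊤ : ℕ∞) (fun z => A z a b) y :=
    fun y hy a b => (hA a b).contDiffAt (hUo.mem_nhds hy)
  have hIat : ∀ (y) (_ : y ∈ U) (a b : Fin n), ContDiffAt ℝ (⊤ : ℕ∞) (fun z => (A z)⁻¹ a b) y :=
    fun y hy a b => contDiffAt_inv_entry (hAat y hy) (hdet y hy) a b
  -- key: derivative of A⁻¹ * A = 1
  have key : ∀ b : Fin n, ∑ s, pd (fun z => (A z)⁻¹ i s) k x * A x s b
      = -∑ s, (A x)⁻¹ i s * pd (fun z => A z s b) k x := by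
    intro b
    have h0 : pd (fun y => ∑ s, (A y)⁻¹ i s * A y s b) k x = 0 := by
      rw [pd_congr hUo hx (fun y hy => inv_mul_entry (hdet y hy) i b) k, pd_const]
    have h1 : pd (fun y => ∑ s, (A y)⁻¹ i s * A y s b) k x
        = ∑ s, (pd (fun z => (A z)⁻¹ i s) k x * A x s b
            + (A x)⁻¹ i s * pd (fun z => A z s b) k x) := by
      rw [pd_sum Finset.univ (fun s _ =>
        ((hIat x hx i s).diffAt.fun_mul (hAat x hx s b).diffAt)) k]
      exact Finset.sum_congr rfl fun s _ =>
        pd_mul (hIat x hx i s).diffAt (hAat x hx s b).diffAt k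
    rw [h1, Finset.sum_add_distrib] at h0
    linarith [h0]
  -- recover pd of inverse entry
  have main : pd (fun z => (A z)⁻¹ i j) k x
      = ∑ b, (∑ s, pd (fun z => (A z)⁻¹ i s) k x * A x s b) * (A x)⁻¹ b j := by
    have : ∑ b, (∑ s, pd (fun z => (A z)⁻¹ i s) k x * A x s b) * (A x)⁻¹ b j
        = ∑ s, pd (fun z => (A z)⁻¹ i s) k x * ∑ b, A x s b * (A x)⁻¹ b j := by
      simp only [Finset.sum_mul, Finset.mul_sum, mul_assoc]
      exact Finset.sum_comm
    rw [this]
    have : ∀ s, (∑ b, A x s b * (A x)⁻¹ b j) = (if s = j then (1:ℝ) else 0) :=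
      fun s => mul_inv_entry (hdet x hx) s j
    simp only [this]
    rw [sum_mul_delta]
  rw [main]
  have : ∀ b, (∑ s, pd (fun z => (A z)⁻¹ i s) k x * A x s b) * (A x)⁻¹ b j
      = (-∑ s, (A x)⁻¹ i s * pd (fun z => A z s b) k x) * (A x)⁻¹ b j := by
    intro b; rw [key b]
  rw [Finset.sum_congr rfl fun b _ => this b]
  have h2 : ∀ b, (-∑ s, (A x)⁻¹ i s * pd (fun z => A z s b) k x) * (A x)⁻¹ b j
      = ∑ s, -((A x)⁻¹ i s * pd (fun z => A z s b) k x * (A x)⁻¹ b j) := by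
    intro b
    rw [neg_mul, Finset.sum_mul, ← Finset.sum_neg_distrib]
  rw [Finset.sum_congr rfl fun b _ => h2 b]
  rw [Finset.sum_comm]
  simp only [Finset.sum_neg_distrib]


noncomputable def lamSharp {n : ℕ} (g L : (Fin n → ℝ) → Matrix (Fin n) (Fin n) ℝ)
    (l : Fin n) (x : Fin n → ℝ) : ℝ :=
  ∑ s, (g x)⁻¹ l s * pd (lamL L) s x

noncomputable def uvec {n : ℕ} (L : (Fin n → ℝ) → Matrix (Fin n) (Fin n) ℝ)
    (j : Fin n) (x : Fin n → ℝ) : ℝ :=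
  ∑ t, (L x)⁻¹ t j * pd (lamL L) t x

noncomputable def HessL {n : ℕ} (g L : (Fin n → ℝ) → Matrix (Fin n) (Fin n) ℝ)
    (c p : Fin n) (x : Fin n → ℝ) : ℝ :=
  pd (pd (lamL L) p) c x - ∑ s, Christoffel g s c p x * pd (lamL L) s x

noncomputable def HupL {n : ℕ} (g L : (Fin n → ℝ) → Matrix (Fin n) (Fin n) ℝ)
    (l c : Fin n) (x : Fin n → ℝ) : ℝ :=
  pd (lamSharp g L l) c x + ∑ s, Christoffel g l c s x * lamSharp g L s x

section main
open scoped Matrix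
variable {n : ℕ} {U : Set (Fin n → ℝ)}
  {g L : (Fin n → ℝ) → Matrix (Fin n) (Fin n) ℝ}

-- ### smoothness facts
lemma cg (hUo : IsOpen U) (hg : IsMetricOn g U) {x : Fin n → ℝ} (hx : x ∈ U) (i j : Fin n) :
    ContDiffAt ℝ (⊤ : ℕ∞) (fun y => g y i j) x :=
  (hg.1 i j).contDiffAt (hUo.mem_nhds hx)

lemma cL (hUo : IsOpen U) (hgeo : GeodCompatOn g L U) {x : Fin n → ℝ} (hx : x ∈ U) (i j : Fin n) :
    ContDiffAt ℝ (⊤ : ℕ∞) (fun y => L y i j) x :=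
  (hgeo.1 i j).contDiffAt (hUo.mem_nhds hx)

lemma cgi (hUo : IsOpen U) (hg : IsMetricOn g U) {x : Fin n → ℝ} (hx : x ∈ U) (i j : Fin n) :
    ContDiffAt ℝ (⊤ : ℕ∞) (fun y => (g y)⁻¹ i j) x :=
  contDiffAt_inv_entry (cg hUo hg hx) (hg.2.2 x hx) i j

lemma cM (hUo : IsOpen U) (hgeo : GeodCompatOn g L U) (hnd : ∀ x ∈ U, (L x).det ≠ 0)
    {x : Fin n → ℝ} (hx : x ∈ U) (i j : Fin n) :
    ContDiffAt ℝ (⊤ : ℕ∞) (fun y => (L y)⁻¹ i j) x :=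
  contDiffAt_inv_entry (cL hUo hgeo hx) (hnd x hx) i j

lemma clam (hUo : IsOpen U) (hgeo : GeodCompatOn g L U) {x : Fin n → ℝ} (hx : x ∈ U) :
    ContDiffAt ℝ (⊤ : ℕ∞) (lamL L) x := by
  have : lamL L = fun y => (1/2 : ℝ) * ∑ i, L y i i := rfl
  rw [this]
  exact contDiffAt_const.mul (contDiffAt_finset_sum _ fun i _ => cL hUo hgeo hx i i)

lemma cpdlam (hUo : IsOpen U) (hgeo : GeodCompatOn g L U) {x : Fin n → ℝ} (hx : x ∈ U)
    (r : Fin n) : ContDiffAt ℝ (⊤ : ℕ∞) (pd (lamL L) r) x :=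
  (clam hUo hgeo hx).pd r

lemma cChristoffel (hUo : IsOpen U) (hg : IsMetricOn g U) {x : Fin n → ℝ} (hx : x ∈ U)
    (i j k : Fin n) : ContDiffAt ℝ (⊤ : ℕ∞) (Christoffel g i j k) x := by
  have : Christoffel g i j k = fun y => (1 / 2 : ℝ) * ∑ s, (g y)⁻¹ i s *
      (pd (fun z => g z s k) j y + pd (fun z => g z s j) k y - pd (fun z => g z j k) s y) := rfl
  rw [this]
  refine contDiffAt_const.mul (contDiffAt_finset_sum _ fun s _ => (cgi hUo hg hx i s).mul ?_)
  exact (((cg hUo hg hx s k).pd j).add ((cg hUo hg hx s j).pd k)).sub ((cg hUo hg hx j k).pd s)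

lemma clowL (hUo : IsOpen U) (hg : IsMetricOn g U) (hgeo : GeodCompatOn g L U)
    {x : Fin n → ℝ} (hx : x ∈ U) (i j : Fin n) :
    ContDiffAt ℝ (⊤ : ℕ∞) (fun y => lowL g L y i j) x := by
  have : (fun y => lowL g L y i j) = fun y => ∑ s, L y s i * g y s j := rfl
  rw [this]
  exact contDiffAt_finset_sum _ fun s _ => (cL hUo hgeo hx s i).mul (cg hUo hg hx s j)

lemma clamSharp (hUo : IsOpen U) (hg : IsMetricOn g U) (hgeo : GeodCompatOn g L U)
    {x : Fin n → ℝ} (hx : x ∈ U) (l : Fin n) :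
    ContDiffAt ℝ (⊤ : ℕ∞) (lamSharp g L l) x := by
  have : lamSharp g L l = fun y => ∑ s, (g y)⁻¹ l s * pd (lamL L) s y := rfl
  rw [this]
  exact contDiffAt_finset_sum _ fun s _ => (cgi hUo hg hx l s).mul (cpdlam hUo hgeo hx s)

lemma cGhat (hUo : IsOpen U) (hg : IsMetricOn g U) (hgeo : GeodCompatOn g L U)
    (hnd : ∀ x ∈ U, (L x).det ≠ 0) {x : Fin n → ℝ} (hx : x ∈ U) (i j : Fin n) :
    ContDiffAt ℝ (⊤ : ℕ∞) (fun y => (g y * (L y)⁻¹) i j) x := by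
  have : (fun y => (g y * (L y)⁻¹) i j) = fun y => ∑ s, g y i s * (L y)⁻¹ s j := by
    funext y; rw [Matrix.mul_apply]
  rw [this]
  exact contDiffAt_finset_sum _ fun s _ => (cg hUo hg hx i s).mul (cM hUo hgeo hnd hx s j)

-- ### pointwise matrix facts
lemma gsym (hg : IsMetricOn g U) {x : Fin n → ℝ} (hx : x ∈ U) (i j : Fin n) :
    g x i j = g x j i := by
  have := hg.2.1 x hx
  rw [Matrix.IsSymm] at this
  exact (congrFun (congrFun this j) i).symm ▸ rfl

lemma gisym (hg : IsMetricOn g U) {x : Fin n → ℝ} (hx : x ∈ U) (i j : Fin n) :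
    (g x)⁻¹ i j = (g x)⁻¹ j i := by
  have h : ((g x)⁻¹)ᵀ = (g x)⁻¹ := by
    rw [Matrix.transpose_nonsing_inv, (hg.2.1 x hx)]
  exact (congrFun (congrFun h j) i).symm ▸ rfl

lemma gig (hg : IsMetricOn g U) {x : Fin n → ℝ} (hx : x ∈ U) (i j : Fin n) :
    ∑ s, (g x)⁻¹ i s * g x s j = (if i = j then (1:ℝ) else 0) :=
  inv_mul_entry (hg.2.2 x hx) i j

lemma ggi (hg : IsMetricOn g U) {x : Fin n → ℝ} (hx : x ∈ U) (i j : Fin n) :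
    ∑ s, g x i s * (g x)⁻¹ s j = (if i = j then (1:ℝ) else 0) :=
  mul_inv_entry (hg.2.2 x hx) i j

lemma LM (hnd : ∀ x ∈ U, (L x).det ≠ 0) {x : Fin n → ℝ} (hx : x ∈ U) (i j : Fin n) :
    ∑ s, L x i s * (L x)⁻¹ s j = (if i = j then (1:ℝ) else 0) :=
  mul_inv_entry (hnd x hx) i j

lemma ML (hnd : ∀ x ∈ U, (L x).det ≠ 0) {x : Fin n → ℝ} (hx : x ∈ U) (i j : Fin n) :
    ∑ s, (L x)⁻¹ i s * L x s j = (if i = j then (1:ℝ) else 0) :=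
  inv_mul_entry (hnd x hx) i j

/-- `Lᵀ g = g L` as matrices. -/
lemma LTg (hg : IsMetricOn g U) (hgeo : GeodCompatOn g L U) {x : Fin n → ℝ} (hx : x ∈ U) :
    (L x)ᵀ * g x = g x * L x := by
  apply Matrix.ext
  intro i j
  have h1 := hgeo.2.1 x hx j i
  rw [lowL, lowL] at h1
  rw [Matrix.mul_apply, Matrix.mul_apply]
  calc ∑ s, (L x)ᵀ i s * g x s j = ∑ s, L x s i * g x s j := by
        apply Finset.sum_congr rfl; intro s _; rw [Matrix.transpose_apply]
    _ = ∑ s, L x s j * g x s i := h1.symm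
    _ = ∑ s, g x i s * L x s j := by
        apply Finset.sum_congr rfl; intro s _; rw [gsym hg hx i s]; ring

/-- `g L⁻¹ = (L⁻¹)ᵀ g`, i.e. `ĝ` is symmetric. -/
lemma ghat_symm (hg : IsMetricOn g U) (hgeo : GeodCompatOn g L U)
    (hnd : ∀ x ∈ U, (L x).det ≠ 0) {x : Fin n → ℝ} (hx : x ∈ U) :
    (g x * (L x)⁻¹)ᵀ = g x * (L x)⁻¹ := by
  have hL : IsUnit (L x).det := isUnit_iff_ne_zero.2 (hnd x hx)
  have h1 : (L x)ᵀ * (g x * (L x)⁻¹) = g x := by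
    rw [← Matrix.mul_assoc, LTg hg hgeo hx, Matrix.mul_assoc,
      Matrix.mul_nonsing_inv _ hL, Matrix.mul_one]
  have h2 : (g x * (L x)⁻¹) = ((L x)ᵀ)⁻¹ * g x := by
    have hLT : IsUnit ((L x)ᵀ).det := by rwa [Matrix.det_transpose]
    calc g x * (L x)⁻¹ = ((L x)ᵀ)⁻¹ * ((L x)ᵀ * (g x * (L x)⁻¹)) := by
          rw [← Matrix.mul_assoc, Matrix.nonsing_inv_mul _ hLT, Matrix.one_mul]
      _ = ((L x)ᵀ)⁻¹ * g x := by rw [h1]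
  rw [h2, Matrix.transpose_mul, ← Matrix.transpose_nonsing_inv, Matrix.transpose_transpose,
    hg.2.1 x hx, h2, Matrix.transpose_nonsing_inv]

lemma ghat_sym_entry (hg : IsMetricOn g U) (hgeo : GeodCompatOn g L U)
    (hnd : ∀ x ∈ U, (L x).det ≠ 0) {x : Fin n → ℝ} (hx : x ∈ U) (i j : Fin n) :
    (g x * (L x)⁻¹) i j = (g x * (L x)⁻¹) j i := by
  have := ghat_symm hg hgeo hnd hx
  exact (congrFun (congrFun this j) i).symm ▸ rfl

lemma ghat_det (hg : IsMetricOn g U) (hnd : ∀ x ∈ U, (L x).det ≠ 0)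
    {x : Fin n → ℝ} (hx : x ∈ U) : (g x * (L x)⁻¹).det ≠ 0 := by
  rw [Matrix.det_mul, Matrix.det_nonsing_inv]
  exact mul_ne_zero (hg.2.2 x hx) (by
    rw [Ring.inverse_eq_inv']
    exact inv_ne_zero (hnd x hx))

lemma ghat_inv (hg : IsMetricOn g U) (hnd : ∀ x ∈ U, (L x).det ≠ 0)
    {x : Fin n → ℝ} (hx : x ∈ U) : (g x * (L x)⁻¹)⁻¹ = L x * (g x)⁻¹ := by
  rw [Matrix.mul_inv_rev, Matrix.nonsing_inv_nonsing_inv _ (isUnit_iff_ne_zero.2 (hnd x hx))]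

/-- Claim A : `∑ s, g⁻¹ p s * M t s = ∑ s, M p s * g⁻¹ s t` (i.e. `g⁻¹ Mᵀ = M g⁻¹`). -/
lemma claimA (hg : IsMetricOn g U) (hgeo : GeodCompatOn g L U)
    (hnd : ∀ x ∈ U, (L x).det ≠ 0) {x : Fin n → ℝ} (hx : x ∈ U) (p t : Fin n) :
    ∑ s, (g x)⁻¹ p s * (L x)⁻¹ t s = ∑ s, (L x)⁻¹ p s * (g x)⁻¹ s t := by
  have hM : (g x)⁻¹ * ((L x)⁻¹)ᵀ = (L x)⁻¹ * (g x)⁻¹ := by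
    have hgu : IsUnit (g x).det := isUnit_iff_ne_zero.2 (hg.2.2 x hx)
    have h := ghat_symm hg hgeo hnd hx
    rw [Matrix.transpose_mul, hg.2.1 x hx] at h
    -- h : (L x)⁻¹ᵀ * g x = g x * (L x)⁻¹
    calc (g x)⁻¹ * ((L x)⁻¹)ᵀ
        = (g x)⁻¹ * (((L x)⁻¹ᵀ * g x) * (g x)⁻¹) := by
          rw [Matrix.mul_assoc, Matrix.mul_nonsing_inv _ hgu, Matrix.mul_one]
      _ = (g x)⁻¹ * ((g x * (L x)⁻¹) * (g x)⁻¹) := by rw [h]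
      _ = (L x)⁻¹ * (g x)⁻¹ := by
          rw [← Matrix.mul_assoc, ← Matrix.mul_assoc, Matrix.nonsing_inv_mul _ hgu,
            Matrix.one_mul]
  have := congrFun (congrFun hM p) t
  rw [Matrix.mul_apply, Matrix.mul_apply] at this
  calc ∑ s, (g x)⁻¹ p s * (L x)⁻¹ t s
      = ∑ s, (g x)⁻¹ p s * ((L x)⁻¹)ᵀ s t := by
        apply Finset.sum_congr rfl; intro s _; rw [Matrix.transpose_apply]
    _ = ∑ s, (L x)⁻¹ p s * (g x)⁻¹ s t := this

end main


section main2
open scoped Matrix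
variable {n : ℕ} {U : Set (Fin n → ℝ)}
  {g L : (Fin n → ℝ) → Matrix (Fin n) (Fin n) ℝ}

lemma pdg_sym (hUo : IsOpen U) (hg : IsMetricOn g U) {x : Fin n → ℝ} (hx : x ∈ U)
    (a b c : Fin n) :
    pd (fun y => g y a b) c x = pd (fun y => g y b a) c x :=
  pd_congr hUo hx (fun y hy => gsym hg hy a b) c

lemma Gamma_sym (hUo : IsOpen U) (hg : IsMetricOn g U) {x : Fin n → ℝ} (hx : x ∈ U)
    (i j k : Fin n) : Christoffel g i j k x = Christoffel g i k j x := by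
  rw [Christoffel, Christoffel]
  congr 1
  apply Finset.sum_congr rfl
  intro s _
  rw [pdg_sym hUo hg hx j k s]
  ring

lemma contract_gig (hg : IsMetricOn g U) {x : Fin n → ℝ} (hx : x ∈ U)
    (T : Fin n → ℝ) (j : Fin n) :
    ∑ s, (∑ a, (g x)⁻¹ s a * T a) * g x s j = T j := by
  have h1 : ∀ s : Fin n, (∑ a, (g x)⁻¹ s a * T a) * g x s j
      = ∑ a, T a * ((g x)⁻¹ a s * g x s j) := by
    intro s
    rw [Finset.sum_mul]
    apply Finset.sum_congr rfl
    intro a _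
    rw [gisym hg hx s a]
    ring
  calc ∑ s, (∑ a, (g x)⁻¹ s a * T a) * g x s j
      = ∑ s, ∑ a, T a * ((g x)⁻¹ a s * g x s j) := Finset.sum_congr rfl fun s _ => h1 s
    _ = ∑ a, ∑ s, T a * ((g x)⁻¹ a s * g x s j) := Finset.sum_comm
    _ = ∑ a, T a * (if a = j then (1:ℝ) else 0) := by
        apply Finset.sum_congr rfl
        intro a _
        rw [← Finset.mul_sum, gig hg hx a j]
    _ = T j := sum_mul_delta T j

/-- metricity : `∂_k g_{ij} = Γ^s_{ki} g_{sj} + Γ^s_{kj} g_{is}`. -/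
lemma metricity (hUo : IsOpen U) (hg : IsMetricOn g U) {x : Fin n → ℝ} (hx : x ∈ U)
    (i j k : Fin n) :
    pd (fun y => g y i j) k x
      = ∑ s, Christoffel g s k i x * g x s j + ∑ s, Christoffel g s k j x * g x i s := by
  have T1 : ∀ a : Fin n, Christoffel g a k i x = (1/2) * ∑ s, (g x)⁻¹ a s *
      (pd (fun y => g y s i) k x + pd (fun y => g y s k) i x - pd (fun y => g y k i) s x) := by
    intro a; rfl
  have e1 : ∑ s, Christoffel g s k i x * g x s j
      = (1/2) * (pd (fun y => g y j i) k x + pd (fun y => g y j k) i x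
          - pd (fun y => g y k i) j x) := by
    have := contract_gig hg hx (fun a =>
      pd (fun y => g y a i) k x + pd (fun y => g y a k) i x - pd (fun y => g y k i) a x) j
    calc ∑ s, Christoffel g s k i x * g x s j
        = ∑ s, ((1/2) * ∑ a, (g x)⁻¹ s a *
            (pd (fun y => g y a i) k x + pd (fun y => g y a k) i x
              - pd (fun y => g y k i) a x)) * g x s j := by
          apply Finset.sum_congr rfl; intro s _; rw [T1 s]
      _ = (1/2) * ∑ s, (∑ a, (g x)⁻¹ s a *
            (pd (fun y => g y a i) k x + pd (fun y => g y a k) i x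
              - pd (fun y => g y k i) a x)) * g x s j := by
          rw [Finset.mul_sum]
          apply Finset.sum_congr rfl; intro s _; ring
      _ = (1/2) * (pd (fun y => g y j i) k x + pd (fun y => g y j k) i x
            - pd (fun y => g y k i) j x) := by rw [this]
  have e2 : ∑ s, Christoffel g s k j x * g x i s
      = (1/2) * (pd (fun y => g y i j) k x + pd (fun y => g y i k) j x
          - pd (fun y => g y k j) i x) := by
    have := contract_gig hg hx (fun a =>
      pd (fun y => g y a j) k x + pd (fun y => g y a k) j x - pd (fun y => g y k j) a x) i
    calc ∑ s, Christoffel g s k j x * g x i s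
        = ∑ s, ((1/2) * ∑ a, (g x)⁻¹ s a *
            (pd (fun y => g y a j) k x + pd (fun y => g y a k) j x
              - pd (fun y => g y k j) a x)) * g x s i := by
          apply Finset.sum_congr rfl; intro s _
          rw [gsym hg hx i s]; rfl
      _ = (1/2) * ∑ s, (∑ a, (g x)⁻¹ s a *
            (pd (fun y => g y a j) k x + pd (fun y => g y a k) j x
              - pd (fun y => g y k j) a x)) * g x s i := by
          rw [Finset.mul_sum]
          apply Finset.sum_congr rfl; intro s _; ring
      _ = (1/2) * (pd (fun y => g y i j) k x + pd (fun y => g y i k) j x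
            - pd (fun y => g y k j) i x) := by rw [this]
  rw [e1, e2, pdg_sym hUo hg hx j i k, pdg_sym hUo hg hx j k i,
    pdg_sym hUo hg hx k i j]
  ring

end main2


section main3
open scoped Matrix
variable {n : ℕ} {U : Set (Fin n → ℝ)}
  {g L : (Fin n → ℝ) → Matrix (Fin n) (Fin n) ℝ}

lemma contract_pair {A B : Matrix (Fin n) (Fin n) ℝ}
    (hAB : ∀ t s, ∑ q, A t q * B q s = (if t = s then (1:ℝ) else 0))
    (X : Fin n → ℝ) (s : Fin n) :
    ∑ q, (∑ t, X t * A t q) * B q s = X s := by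
  have h1 : ∀ q, (∑ t, X t * A t q) * B q s = ∑ t, X t * (A t q * B q s) := by
    intro q; rw [Finset.sum_mul]; apply Finset.sum_congr rfl; intro t _; ring
  calc ∑ q, (∑ t, X t * A t q) * B q s
      = ∑ q, ∑ t, X t * (A t q * B q s) := Finset.sum_congr rfl fun q _ => h1 q
    _ = ∑ t, ∑ q, X t * (A t q * B q s) := Finset.sum_comm
    _ = ∑ t, X t * (if t = s then (1:ℝ) else 0) := by
        apply Finset.sum_congr rfl; intro t _
        rw [← Finset.mul_sum, hAB t s]
    _ = X s := sum_mul_delta X s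

lemma contract_mid {A B : Matrix (Fin n) (Fin n) ℝ}
    (hAB : ∀ a t, ∑ p, A a p * B p t = (if a = t then (1:ℝ) else 0))
    (X : Fin n → ℝ) (a : Fin n) :
    ∑ p, A a p * (∑ t, X t * B p t) = X a := by
  have h1 : ∀ p, A a p * (∑ t, X t * B p t) = ∑ t, X t * (A a p * B p t) := by
    intro p; rw [Finset.mul_sum]; apply Finset.sum_congr rfl; intro t _; ring
  calc ∑ p, A a p * (∑ t, X t * B p t)
      = ∑ p, ∑ t, X t * (A a p * B p t) := Finset.sum_congr rfl fun p _ => h1 p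
    _ = ∑ t, ∑ p, X t * (A a p * B p t) := Finset.sum_comm
    _ = ∑ t, X t * (if a = t then (1:ℝ) else 0) := by
        apply Finset.sum_congr rfl; intro t _
        rw [← Finset.mul_sum, hAB a t]
    _ = X a := by simp [mul_ite]

/-- `∂_c (g⁻¹)_{as} = - g⁻¹_{ap} Γ^s_{cp} - Γ^a_{cq} g⁻¹_{qs}` (i.e. `∇ g⁻¹ = 0`). -/
lemma pd_ginv (hUo : IsOpen U) (hg : IsMetricOn g U) {x : Fin n → ℝ} (hx : x ∈ U)
    (a s c : Fin n) :
    pd (fun y => (g y)⁻¹ a s) c x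
      = -∑ p, (g x)⁻¹ a p * Christoffel g s c p x
        - ∑ q, Christoffel g a c q x * (g x)⁻¹ q s := by
  rw [pd_inv_entry hUo hg.1 hg.2.2 hx a s c]
  have expand : ∀ p q : Fin n, (g x)⁻¹ a p * pd (fun y => g y p q) c x * (g x)⁻¹ q s
      = (g x)⁻¹ a p * ((∑ t, Christoffel g t c p x * g x t q) * (g x)⁻¹ q s)
        + (g x)⁻¹ a p * ((∑ t, Christoffel g t c q x * g x p t) * (g x)⁻¹ q s) := by
    intro p q
    rw [metricity hUo hg hx p q c]
    ring
  have split : ∑ p, ∑ q, (g x)⁻¹ a p * pd (fun y => g y p q) c x * (g x)⁻¹ q s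
      = (∑ p, ∑ q, (g x)⁻¹ a p * ((∑ t, Christoffel g t c p x * g x t q) * (g x)⁻¹ q s))
        + (∑ p, ∑ q, (g x)⁻¹ a p
            * ((∑ t, Christoffel g t c q x * g x p t) * (g x)⁻¹ q s)) := by
    rw [← Finset.sum_add_distrib]
    apply Finset.sum_congr rfl; intro p _
    rw [← Finset.sum_add_distrib]
    apply Finset.sum_congr rfl; intro q _
    exact expand p q
  rw [split]
  have S1 : ∑ p, ∑ q, (g x)⁻¹ a p * ((∑ t, Christoffel g t c p x * g x t q) * (g x)⁻¹ q s)
      = ∑ p, (g x)⁻¹ a p * Christoffel g s c p x := by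
    apply Finset.sum_congr rfl; intro p _
    rw [← Finset.mul_sum]
    congr 1
    exact contract_pair (ggi hg hx) (fun t => Christoffel g t c p x) s
  have S2 : ∑ p, ∑ q, (g x)⁻¹ a p * ((∑ t, Christoffel g t c q x * g x p t) * (g x)⁻¹ q s)
      = ∑ q, Christoffel g a c q x * (g x)⁻¹ q s := by
    rw [Finset.sum_comm]
    apply Finset.sum_congr rfl; intro q _
    have h1 : ∀ p, (g x)⁻¹ a p * ((∑ t, Christoffel g t c q x * g x p t) * (g x)⁻¹ q s)
        = ((g x)⁻¹ a p * (∑ t, Christoffel g t c q x * g x p t)) * (g x)⁻¹ q s := by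
      intro p; ring
    rw [Finset.sum_congr rfl fun p _ => h1 p, ← Finset.sum_mul]
    congr 1
    exact contract_mid (gig hg hx) (fun t => Christoffel g t c q x) a
  rw [S1, S2]
  ring

/-- compatibility, solved for `∂_k ℓ_{ij}`. -/
lemma pd_lowL (hUo : IsOpen U) (hgeo : GeodCompatOn g L U) {x : Fin n → ℝ} (hx : x ∈ U)
    (i j k : Fin n) :
    pd (fun y => lowL g L y i j) k x
      = pd (lamL L) i x * g x j k + pd (lamL L) j x * g x i k
        + ∑ s, Christoffel g s k i x * lowL g L x s j
        + ∑ s, Christoffel g s k j x * lowL g L x i s := by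
  have h := hgeo.2.2 x hx k i j
  rw [covL] at h
  linarith [h]

/-- `g L = ℓ` entrywise. -/
lemma gL_eq_lowL (hg : IsMetricOn g U) (hgeo : GeodCompatOn g L U) {x : Fin n → ℝ}
    (hx : x ∈ U) (i j : Fin n) :
    ∑ s, g x i s * L x s j = lowL g L x i j := by
  calc ∑ s, g x i s * L x s j = ∑ s, L x s j * g x s i := by
        apply Finset.sum_congr rfl; intro s _; rw [gsym hg hx i s]; ring
    _ = lowL g L x j i := rfl
    _ = lowL g L x i j := (hgeo.2.1 x hx i j).symm

/-- `L = g⁻¹ ℓ` entrywise. -/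
lemma L_eq_ginv_lowL (hg : IsMetricOn g U) (hgeo : GeodCompatOn g L U) {x : Fin n → ℝ}
    (hx : x ∈ U) (a b : Fin n) :
    L x a b = ∑ s, (g x)⁻¹ a s * lowL g L x s b := by
  have h1 : ∀ s, lowL g L x s b = ∑ t, g x s t * L x t b := by
    intro s; rw [gL_eq_lowL hg hgeo hx s b]
  calc L x a b = ∑ t, L x t b * (if a = t then (1:ℝ) else 0) := by
        simp [mul_ite]
    _ = ∑ t, L x t b * (∑ s, (g x)⁻¹ a s * g x s t) := by
        apply Finset.sum_congr rfl; intro t _; rw [gig hg hx a t]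
    _ = ∑ t, ∑ s, L x t b * ((g x)⁻¹ a s * g x s t) := by
        apply Finset.sum_congr rfl; intro t _; rw [Finset.mul_sum]
    _ = ∑ s, ∑ t, L x t b * ((g x)⁻¹ a s * g x s t) := Finset.sum_comm
    _ = ∑ s, (g x)⁻¹ a s * lowL g L x s b := by
        apply Finset.sum_congr rfl; intro s _
        rw [h1 s, Finset.mul_sum]
        apply Finset.sum_congr rfl; intro t _; ring

end main3


section main4
open scoped Matrix
variable {n : ℕ} {U : Set (Fin n → ℝ)}
  {g L : (Fin n → ℝ) → Matrix (Fin n) (Fin n) ℝ}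

lemma sum_eq {f h : Fin n → ℝ} (he : ∀ i, f i = h i) : ∑ i, f i = ∑ i, h i :=
  Finset.sum_congr rfl fun i _ => he i

/-- `∂_c L^a_b = λ^a g_{bc} + λ_b δ^a_c - Γ^a_{cq} L^q_b + Γ^t_{cb} L^a_t`. -/
lemma pd_L (hUo : IsOpen U) (hg : IsMetricOn g U) (hgeo : GeodCompatOn g L U)
    {x : Fin n → ℝ} (hx : x ∈ U) (a b c : Fin n) :
    pd (fun y => L y a b) c x
      = lamSharp g L a x * g x b c + pd (lamL L) b x * (if a = c then (1:ℝ) else 0)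
        - ∑ q, Christoffel g a c q x * L x q b
        + ∑ t, Christoffel g t c b x * L x a t := by
  have step0 : pd (fun y => L y a b) c x
      = pd (fun y => ∑ s, (g y)⁻¹ a s * lowL g L y s b) c x :=
    pd_congr hUo hx (fun y hy => L_eq_ginv_lowL hg hgeo hy a b) c
  have step1 : pd (fun y => ∑ s, (g y)⁻¹ a s * lowL g L y s b) c x
      = ∑ s, (pd (fun y => (g y)⁻¹ a s) c x * lowL g L x s b
          + (g x)⁻¹ a s * pd (fun y => lowL g L y s b) c x) := by
    rw [pd_sum Finset.univ (fun s _ =>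
      ((cgi hUo hg hx a s).diffAt.fun_mul (clowL hUo hg hgeo hx s b).diffAt)) c]
    exact sum_eq fun s =>
      pd_mul (cgi hUo hg hx a s).diffAt (clowL hUo hg hgeo hx s b).diffAt c
  have partA : ∑ s, pd (fun y => (g y)⁻¹ a s) c x * lowL g L x s b
      = -(∑ s, ∑ p, (g x)⁻¹ a p * (Christoffel g s c p x * lowL g L x s b))
        - ∑ q, Christoffel g a c q x * L x q b := by
    have h1 : ∀ s, pd (fun y => (g y)⁻¹ a s) c x * lowL g L x s b
        = (∑ p, -((g x)⁻¹ a p * (Christoffel g s c p x * lowL g L x s b)))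
          + (∑ q, -(Christoffel g a c q x * ((g x)⁻¹ q s * lowL g L x s b))) := by
      intro s
      rw [pd_ginv hUo hg hx a s c, sub_mul, neg_mul, Finset.sum_mul, Finset.sum_mul,
        ← Finset.sum_neg_distrib, sub_eq_add_neg, ← Finset.sum_neg_distrib]
      congr 1
      · exact sum_eq fun p => by ring
      · exact sum_eq fun q => by ring
    calc ∑ s, pd (fun y => (g y)⁻¹ a s) c x * lowL g L x s b
        = ∑ s, ((∑ p, -((g x)⁻¹ a p * (Christoffel g s c p x * lowL g L x s b)))
          + (∑ q, -(Christoffel g a c q x * ((g x)⁻¹ q s * lowL g L x s b)))) :=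
          sum_eq h1
      _ = (∑ s, ∑ p, -((g x)⁻¹ a p * (Christoffel g s c p x * lowL g L x s b)))
          + ∑ s, ∑ q, -(Christoffel g a c q x * ((g x)⁻¹ q s * lowL g L x s b)) :=
          Finset.sum_add_distrib
      _ = -(∑ s, ∑ p, (g x)⁻¹ a p * (Christoffel g s c p x * lowL g L x s b))
          + ∑ q, ∑ s, -(Christoffel g a c q x * ((g x)⁻¹ q s * lowL g L x s b)) := by
          rw [Finset.sum_comm (f := fun s q =>
            -(Christoffel g a c q x * ((g x)⁻¹ q s * lowL g L x s b)))]
          simp only [Finset.sum_neg_distrib]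
      _ = -(∑ s, ∑ p, (g x)⁻¹ a p * (Christoffel g s c p x * lowL g L x s b))
          - ∑ q, Christoffel g a c q x * L x q b := by
          rw [sub_eq_add_neg]
          congr 1
          rw [← Finset.sum_neg_distrib]
          apply sum_eq
          intro q
          rw [L_eq_ginv_lowL hg hgeo hx q b, Finset.mul_sum, ← Finset.sum_neg_distrib]
  have partB : ∑ s, (g x)⁻¹ a s * pd (fun y => lowL g L y s b) c x
      = lamSharp g L a x * g x b c
        + pd (lamL L) b x * (if a = c then (1:ℝ) else 0)
        + (∑ s, ∑ p, (g x)⁻¹ a p * (Christoffel g s c p x * lowL g L x s b))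
        + ∑ t, Christoffel g t c b x * L x a t := by
    have h1 : ∀ s, (g x)⁻¹ a s * pd (fun y => lowL g L y s b) c x
        = (g x)⁻¹ a s * (pd (lamL L) s x * g x b c)
          + (g x)⁻¹ a s * (pd (lamL L) b x * g x s c)
          + (∑ t, (g x)⁻¹ a s * (Christoffel g t c s x * lowL g L x t b))
          + ∑ t, (g x)⁻¹ a s * (Christoffel g t c b x * lowL g L x s t) := by
      intro s
      rw [pd_lowL hUo hgeo hx s b c, mul_add, mul_add, mul_add, Finset.mul_sum,
        Finset.mul_sum]
    have S1 : ∑ s, (g x)⁻¹ a s * (pd (lamL L) s x * g x b c)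
        = lamSharp g L a x * g x b c := by
      rw [lamSharp, Finset.sum_mul]
      exact sum_eq fun s => by ring
    have S2 : ∑ s, (g x)⁻¹ a s * (pd (lamL L) b x * g x s c)
        = pd (lamL L) b x * (if a = c then (1:ℝ) else 0) := by
      calc ∑ s, (g x)⁻¹ a s * (pd (lamL L) b x * g x s c)
          = ∑ s, pd (lamL L) b x * ((g x)⁻¹ a s * g x s c) := sum_eq fun s => by ring
        _ = pd (lamL L) b x * (if a = c then (1:ℝ) else 0) := by
            rw [← Finset.mul_sum, gig hg hx a c]
    have S3 : ∑ s, ∑ t, (g x)⁻¹ a s * (Christoffel g t c s x * lowL g L x t b)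
        = ∑ s, ∑ p, (g x)⁻¹ a p * (Christoffel g s c p x * lowL g L x s b) :=
      Finset.sum_comm
    have S4 : ∑ s, ∑ t, (g x)⁻¹ a s * (Christoffel g t c b x * lowL g L x s t)
        = ∑ t, Christoffel g t c b x * L x a t := by
      rw [Finset.sum_comm]
      apply sum_eq
      intro t
      calc ∑ s, (g x)⁻¹ a s * (Christoffel g t c b x * lowL g L x s t)
          = ∑ s, Christoffel g t c b x * ((g x)⁻¹ a s * lowL g L x s t) :=
            sum_eq fun s => by ring
        _ = Christoffel g t c b x * L x a t := by
            rw [← Finset.mul_sum, ← L_eq_ginv_lowL hg hgeo hx a t]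
    calc ∑ s, (g x)⁻¹ a s * pd (fun y => lowL g L y s b) c x
        = ∑ s, ((g x)⁻¹ a s * (pd (lamL L) s x * g x b c)
          + (g x)⁻¹ a s * (pd (lamL L) b x * g x s c)
          + (∑ t, (g x)⁻¹ a s * (Christoffel g t c s x * lowL g L x t b))
          + ∑ t, (g x)⁻¹ a s * (Christoffel g t c b x * lowL g L x s t)) := sum_eq h1
      _ = (∑ s, (g x)⁻¹ a s * (pd (lamL L) s x * g x b c))
          + (∑ s, (g x)⁻¹ a s * (pd (lamL L) b x * g x s c))
          + (∑ s, ∑ t, (g x)⁻¹ a s * (Christoffel g t c s x * lowL g L x t b))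
          + ∑ s, ∑ t, (g x)⁻¹ a s * (Christoffel g t c b x * lowL g L x s t) := by
          rw [Finset.sum_add_distrib, Finset.sum_add_distrib, Finset.sum_add_distrib]
      _ = lamSharp g L a x * g x b c
          + pd (lamL L) b x * (if a = c then (1:ℝ) else 0)
          + (∑ s, ∑ p, (g x)⁻¹ a p * (Christoffel g s c p x * lowL g L x s b))
          + ∑ t, Christoffel g t c b x * L x a t := by rw [S1, S2, S3, S4]
  rw [step0, step1, Finset.sum_add_distrib, partA, partB]
  ring

end main4


section main5
open scoped Matrix
variable {n : ℕ} {U : Set (Fin n → ℝ)}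
  {g L : (Fin n → ℝ) → Matrix (Fin n) (Fin n) ℝ}

lemma ghat_entry (g L : (Fin n → ℝ) → Matrix (Fin n) (Fin n) ℝ) (x : Fin n → ℝ) (i j : Fin n) :
    (g x * (L x)⁻¹) i j = ∑ s, g x i s * (L x)⁻¹ s j :=
  Matrix.mul_apply

lemma sum_swap_mul (X : Fin n → ℝ) (A : Fin n → Fin n → ℝ) (B : Fin n → ℝ) :
    ∑ s, (∑ t, X t * A t s) * B s = ∑ t, X t * (∑ s, A t s * B s) := by
  calc ∑ s, (∑ t, X t * A t s) * B s
      = ∑ s, ∑ t, X t * (A t s * B s) := sum_eq fun s => by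
        rw [Finset.sum_mul]; exact sum_eq fun t => by ring
    _ = ∑ t, ∑ s, X t * (A t s * B s) := Finset.sum_comm
    _ = ∑ t, X t * (∑ s, A t s * B s) := sum_eq fun t => by rw [Finset.mul_sum]

lemma gMhelper1 (hg : IsMetricOn g U) (hgeo : GeodCompatOn g L U)
    (hnd : ∀ x ∈ U, (L x).det ≠ 0) {x : Fin n → ℝ} (hx : x ∈ U) (b c : Fin n) :
    ∑ q, g x q c * (L x)⁻¹ q b = (g x * (L x)⁻¹) b c := by
  rw [ghat_sym_entry hg hgeo hnd hx b c, ghat_entry]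
  exact sum_eq fun q => by rw [gsym hg hx q c]

lemma gMhelper2 (hg : IsMetricOn g U) (hnd : ∀ x ∈ U, (L x).det ≠ 0)
    {x : Fin n → ℝ} (hx : x ∈ U) (a t : Fin n) :
    ∑ p, (g x * (L x)⁻¹) a p * L x p t = g x a t := by
  calc ∑ p, (g x * (L x)⁻¹) a p * L x p t
      = ∑ p, (∑ s, g x a s * (L x)⁻¹ s p) * L x p t :=
        sum_eq fun p => by rw [ghat_entry]
    _ = ∑ s, g x a s * (∑ p, (L x)⁻¹ s p * L x p t) := sum_swap_mul _ _ _
    _ = ∑ s, g x a s * (if s = t then (1:ℝ) else 0) :=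
        sum_eq fun s => by rw [ML hnd hx s t]
    _ = g x a t := sum_mul_delta _ _

lemma uhat_eq (hg : IsMetricOn g U) (hgeo : GeodCompatOn g L U)
    (hnd : ∀ x ∈ U, (L x).det ≠ 0) {x : Fin n → ℝ} (hx : x ∈ U) (a : Fin n) :
    ∑ p, (g x * (L x)⁻¹) a p * lamSharp g L p x = uvec L a x := by
  calc ∑ p, (g x * (L x)⁻¹) a p * lamSharp g L p x
      = ∑ p, (∑ s, g x a s * (L x)⁻¹ s p) * lamSharp g L p x :=
        sum_eq fun p => by rw [ghat_entry]
    _ = ∑ s, g x a s * (∑ p, (L x)⁻¹ s p * lamSharp g L p x) := sum_swap_mul _ _ _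
    _ = ∑ s, g x a s * (∑ t, pd (lamL L) t x * (∑ q, (L x)⁻¹ s q * (g x)⁻¹ q t)) := by
        apply sum_eq; intro s; congr 1
        calc ∑ p, (L x)⁻¹ s p * lamSharp g L p x
            = ∑ p, (L x)⁻¹ s p * (∑ t, (g x)⁻¹ p t * pd (lamL L) t x) := rfl
          _ = ∑ p, ∑ t, pd (lamL L) t x * ((L x)⁻¹ s p * (g x)⁻¹ p t) := by
              apply sum_eq; intro p
              rw [Finset.mul_sum]; exact sum_eq fun t => by ring
          _ = ∑ t, ∑ p, pd (lamL L) t x * ((L x)⁻¹ s p * (g x)⁻¹ p t) := Finset.sum_comm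
          _ = ∑ t, pd (lamL L) t x * (∑ q, (L x)⁻¹ s q * (g x)⁻¹ q t) :=
              sum_eq fun t => by rw [Finset.mul_sum]
    _ = ∑ s, g x a s * (∑ t, pd (lamL L) t x * (∑ q, (g x)⁻¹ s q * (L x)⁻¹ t q)) := by
        apply sum_eq; intro s; congr 1
        exact sum_eq fun t => by rw [← claimA hg hgeo hnd hx s t]
    _ = ∑ t, pd (lamL L) t x * (∑ q, (L x)⁻¹ t q * (∑ s, (g x)⁻¹ q s * g x s a)) := by
        calc ∑ s, g x a s * (∑ t, pd (lamL L) t x * (∑ q, (g x)⁻¹ s q * (L x)⁻¹ t q))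
            = ∑ s, ∑ t, ∑ q, pd (lamL L) t x * ((L x)⁻¹ t q * ((g x)⁻¹ q s * g x s a)) := by
              apply sum_eq; intro s
              rw [Finset.mul_sum]
              apply sum_eq; intro t
              rw [Finset.mul_sum, Finset.mul_sum]
              apply sum_eq; intro q
              rw [gsym hg hx a s, gisym hg hx s q]
              ring
          _ = ∑ t, ∑ s, ∑ q, pd (lamL L) t x * ((L x)⁻¹ t q * ((g x)⁻¹ q s * g x s a)) :=
              Finset.sum_comm
          _ = ∑ t, ∑ q, ∑ s, pd (lamL L) t x * ((L x)⁻¹ t q * ((g x)⁻¹ q s * g x s a)) :=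
              sum_eq fun t => Finset.sum_comm
          _ = ∑ t, pd (lamL L) t x * (∑ q, (L x)⁻¹ t q * (∑ s, (g x)⁻¹ q s * g x s a)) := by
              apply sum_eq; intro t
              rw [Finset.mul_sum]
              apply sum_eq; intro q
              rw [Finset.mul_sum, Finset.mul_sum]
    _ = uvec L a x := by
        rw [uvec]
        apply sum_eq; intro t
        have : ∑ q, (L x)⁻¹ t q * (∑ s, (g x)⁻¹ q s * g x s a)
            = ∑ q, (L x)⁻¹ t q * (if q = a then (1:ℝ) else 0) :=
          sum_eq fun q => by rw [gig hg hx q a]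
        rw [this, sum_mul_delta]
        ring
end main5


section main6
open scoped Matrix
variable {n : ℕ} {U : Set (Fin n → ℝ)}
  {g L : (Fin n → ℝ) → Matrix (Fin n) (Fin n) ℝ}

/-- `∂_c ĝ_{ab} = -u_a ĝ_{bc} - u_b ĝ_{ac} + Γ^t_{ca} ĝ_{tb} + Γ^t_{cb} ĝ_{at}`. -/
lemma pd_ghat (hUo : IsOpen U) (hg : IsMetricOn g U) (hgeo : GeodCompatOn g L U)
    (hnd : ∀ x ∈ U, (L x).det ≠ 0) {x : Fin n → ℝ} (hx : x ∈ U) (a b c : Fin n) :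
    pd (fun y => (g y * (L y)⁻¹) a b) c x
      = -(uvec L a x * (g x * (L x)⁻¹) b c) - uvec L b x * (g x * (L x)⁻¹) a c
        + ∑ t, Christoffel g t c a x * (g x * (L x)⁻¹) t b
        + ∑ t, Christoffel g t c b x * (g x * (L x)⁻¹) a t := by
  have step0 : pd (fun y => (g y * (L y)⁻¹) a b) c x
      = pd (fun y => ∑ s, g y a s * (L y)⁻¹ s b) c x := rfl
  have step1 : pd (fun y => ∑ s, g y a s * (L y)⁻¹ s b) c x
      = ∑ s, (pd (fun y => g y a s) c x * (L x)⁻¹ s b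
          + g x a s * pd (fun y => (L y)⁻¹ s b) c x) := by
    rw [pd_sum Finset.univ (fun s _ =>
      ((cg hUo hg hx a s).diffAt.fun_mul (cM hUo hgeo hnd hx s b).diffAt)) c]
    exact sum_eq fun s =>
      pd_mul (cg hUo hg hx a s).diffAt (cM hUo hgeo hnd hx s b).diffAt c
  -- part A : derivative of g
  set W : ℝ := ∑ s, ∑ t, g x a t * (Christoffel g t c s x * (L x)⁻¹ s b) with hW
  have partA : ∑ s, pd (fun y => g y a s) c x * (L x)⁻¹ s b
      = (∑ t, Christoffel g t c a x * (g x * (L x)⁻¹) t b) + W := by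
    have h1 : ∀ s, pd (fun y => g y a s) c x * (L x)⁻¹ s b
        = (∑ t, Christoffel g t c a x * g x t s) * (L x)⁻¹ s b
          + ∑ t, g x a t * (Christoffel g t c s x * (L x)⁻¹ s b) := by
      intro s
      rw [metricity hUo hg hx a s c, add_mul]
      congr 1
      rw [Finset.sum_mul]
      exact sum_eq fun t => by ring
    calc ∑ s, pd (fun y => g y a s) c x * (L x)⁻¹ s b
        = ∑ s, ((∑ t, Christoffel g t c a x * g x t s) * (L x)⁻¹ s b
            + ∑ t, g x a t * (Christoffel g t c s x * (L x)⁻¹ s b)) := sum_eq h1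
      _ = (∑ s, (∑ t, Christoffel g t c a x * g x t s) * (L x)⁻¹ s b) + W :=
          Finset.sum_add_distrib
      _ = (∑ t, Christoffel g t c a x * (g x * (L x)⁻¹) t b) + W := by
          congr 1
          rw [sum_swap_mul (fun t => Christoffel g t c a x) (fun t s => g x t s)
            (fun s => (L x)⁻¹ s b)]
          exact sum_eq fun t => by rw [ghat_entry]
  -- part B : derivative of L⁻¹
  have partB : ∑ s, g x a s * pd (fun y => (L y)⁻¹ s b) c x
      = -(uvec L a x * (g x * (L x)⁻¹) b c) - uvec L b x * (g x * (L x)⁻¹) a c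
        + (∑ t, Christoffel g t c b x * (g x * (L x)⁻¹) a t) - W := by
    -- rewrite as double sum over p q with ĝ a p
    have hB1 : ∑ s, g x a s * pd (fun y => (L y)⁻¹ s b) c x
        = ∑ p, ∑ q, -((g x * (L x)⁻¹) a p
            * (pd (fun y => L y p q) c x * (L x)⁻¹ q b)) := by
      have h1 : ∀ s, g x a s * pd (fun y => (L y)⁻¹ s b) c x
          = ∑ p, ∑ q, -(g x a s * ((L x)⁻¹ s p
              * (pd (fun y => L y p q) c x * (L x)⁻¹ q b))) := by
        intro s
        rw [pd_inv_entry hUo hgeo.1 hnd hx s b c, mul_neg, Finset.mul_sum,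
          ← Finset.sum_neg_distrib]
        apply sum_eq; intro p
        rw [Finset.mul_sum, ← Finset.sum_neg_distrib]
        exact sum_eq fun q => by ring
      calc ∑ s, g x a s * pd (fun y => (L y)⁻¹ s b) c x
          = ∑ s, ∑ p, ∑ q, -(g x a s * ((L x)⁻¹ s p
              * (pd (fun y => L y p q) c x * (L x)⁻¹ q b))) := sum_eq h1
        _ = ∑ p, ∑ s, ∑ q, -(g x a s * ((L x)⁻¹ s p
              * (pd (fun y => L y p q) c x * (L x)⁻¹ q b))) := Finset.sum_comm
        _ = ∑ p, ∑ q, ∑ s, -(g x a s * ((L x)⁻¹ s p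
              * (pd (fun y => L y p q) c x * (L x)⁻¹ q b))) :=
            sum_eq fun p => Finset.sum_comm
        _ = ∑ p, ∑ q, -((g x * (L x)⁻¹) a p
            * (pd (fun y => L y p q) c x * (L x)⁻¹ q b)) := by
            apply sum_eq; intro p
            apply sum_eq; intro q
            rw [ghat_entry, Finset.sum_mul, ← Finset.sum_neg_distrib]
            exact sum_eq fun s => by ring
    -- substitute pd_L; split into four terms (sums treated as atoms)
    have hsplit : ∀ p q, -((g x * (L x)⁻¹) a p
          * (pd (fun y => L y p q) c x * (L x)⁻¹ q b))
        = -((g x * (L x)⁻¹) a p * lamSharp g L p x * (g x q c * (L x)⁻¹ q b))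
          - ((g x * (L x)⁻¹) a p * (pd (lamL L) q x * (L x)⁻¹ q b))
              * (if p = c then (1:ℝ) else 0)
          + (g x * (L x)⁻¹) a p * ((∑ w, Christoffel g p c w x * L x w q) * (L x)⁻¹ q b)
          - (g x * (L x)⁻¹) a p * ((∑ t, Christoffel g t c q x * L x p t) * (L x)⁻¹ q b) := by
      intro p q
      rw [pd_L hUo hg hgeo hx p q c]
      ring
    rw [hB1]
    have hsplit2 : ∑ p, ∑ q, -((g x * (L x)⁻¹) a p
          * (pd (fun y => L y p q) c x * (L x)⁻¹ q b))
        = (∑ p, ∑ q, -((g x * (L x)⁻¹) a p * lamSharp g L p x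
              * (g x q c * (L x)⁻¹ q b)))
          + (∑ p, ∑ q, -(((g x * (L x)⁻¹) a p * (pd (lamL L) q x * (L x)⁻¹ q b))
              * (if p = c then (1:ℝ) else 0)))
          + (∑ p, ∑ q, (g x * (L x)⁻¹) a p
              * ((∑ w, Christoffel g p c w x * L x w q) * (L x)⁻¹ q b))
          + ∑ p, ∑ q, -((g x * (L x)⁻¹) a p
              * ((∑ t, Christoffel g t c q x * L x p t) * (L x)⁻¹ q b)) := by
      rw [← Finset.sum_add_distrib, ← Finset.sum_add_distrib, ← Finset.sum_add_distrib]
      apply sum_eq; intro p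
      rw [← Finset.sum_add_distrib, ← Finset.sum_add_distrib, ← Finset.sum_add_distrib]
      apply sum_eq; intro q
      rw [hsplit p q]
      ring
    rw [hsplit2]
    -- Σ1
    have Sig1 : ∑ p, ∑ q, -((g x * (L x)⁻¹) a p * lamSharp g L p x
          * (g x q c * (L x)⁻¹ q b))
        = -(uvec L a x * (g x * (L x)⁻¹) b c) := by
      calc ∑ p, ∑ q, -((g x * (L x)⁻¹) a p * lamSharp g L p x * (g x q c * (L x)⁻¹ q b))
          = ∑ p, -((g x * (L x)⁻¹) a p * lamSharp g L p x
              * (∑ q, g x q c * (L x)⁻¹ q b)) := by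
            apply sum_eq; intro p
            rw [Finset.mul_sum, ← Finset.sum_neg_distrib]
        _ = ∑ p, -((g x * (L x)⁻¹) a p * lamSharp g L p x * (g x * (L x)⁻¹) b c) := by
            apply sum_eq; intro p
            rw [gMhelper1 hg hgeo hnd hx b c]
        _ = -((∑ p, (g x * (L x)⁻¹) a p * lamSharp g L p x) * (g x * (L x)⁻¹) b c) := by
            rw [Finset.sum_mul, ← Finset.sum_neg_distrib]
        _ = -(uvec L a x * (g x * (L x)⁻¹) b c) := by
            rw [uhat_eq hg hgeo hnd hx a]
    -- Σ2
    have Sig2 : ∑ p, ∑ q, -(((g x * (L x)⁻¹) a p * (pd (lamL L) q x * (L x)⁻¹ q b))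
          * (if p = c then (1:ℝ) else 0))
        = -(uvec L b x * (g x * (L x)⁻¹) a c) := by
      calc ∑ p, ∑ q, -(((g x * (L x)⁻¹) a p * (pd (lamL L) q x * (L x)⁻¹ q b))
            * (if p = c then (1:ℝ) else 0))
          = ∑ p, (-((g x * (L x)⁻¹) a p * (∑ q, pd (lamL L) q x * (L x)⁻¹ q b)))
              * (if p = c then (1:ℝ) else 0) := by
            apply sum_eq; intro p
            rw [Finset.mul_sum, neg_mul, Finset.sum_mul, ← Finset.sum_neg_distrib]
        _ = -((g x * (L x)⁻¹) a c * (∑ q, pd (lamL L) q x * (L x)⁻¹ q b)) :=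
            sum_mul_delta _ c
        _ = -(uvec L b x * (g x * (L x)⁻¹) a c) := by
            rw [uvec]
            have : ∑ q, pd (lamL L) q x * (L x)⁻¹ q b
                = ∑ t, (L x)⁻¹ t b * pd (lamL L) t x := sum_eq fun q => by ring
            rw [this]
            ring
    -- Σ3
    have Sig3 : ∑ p, ∑ q, (g x * (L x)⁻¹) a p
          * ((∑ w, Christoffel g p c w x * L x w q) * (L x)⁻¹ q b)
        = ∑ t, Christoffel g t c b x * (g x * (L x)⁻¹) a t := by
      calc ∑ p, ∑ q, (g x * (L x)⁻¹) a p
            * ((∑ w, Christoffel g p c w x * L x w q) * (L x)⁻¹ q b)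
          = ∑ p, (g x * (L x)⁻¹) a p
              * ∑ q, (∑ w, Christoffel g p c w x * L x w q) * (L x)⁻¹ q b :=
            sum_eq fun p => by rw [Finset.mul_sum]
        _ = ∑ p, (g x * (L x)⁻¹) a p * Christoffel g p c b x := by
            apply sum_eq; intro p
            rw [contract_pair (LM hnd hx) (fun w => Christoffel g p c w x) b]
        _ = ∑ t, Christoffel g t c b x * (g x * (L x)⁻¹) a t := by
            apply sum_eq; intro t
            rw [Gamma_sym hUo hg hx t c b]
            rw [Gamma_sym hUo hg hx t b c]
            ring
    -- Σ4
    have Sig4 : ∑ p, ∑ q, -((g x * (L x)⁻¹) a p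
          * ((∑ t, Christoffel g t c q x * L x p t) * (L x)⁻¹ q b))
        = -W := by
      calc ∑ p, ∑ q, -((g x * (L x)⁻¹) a p
            * ((∑ t, Christoffel g t c q x * L x p t) * (L x)⁻¹ q b))
          = ∑ q, ∑ p, -((g x * (L x)⁻¹) a p
            * ((∑ t, Christoffel g t c q x * L x p t) * (L x)⁻¹ q b)) := Finset.sum_comm
        _ = ∑ q, ∑ t, -(g x a t * (Christoffel g t c q x * (L x)⁻¹ q b)) := by
            apply sum_eq; intro q
            calc ∑ p, -((g x * (L x)⁻¹) a p
                  * ((∑ t, Christoffel g t c q x * L x p t) * (L x)⁻¹ q b))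
                = ∑ p, ∑ t, -(Christoffel g t c q x
                    * ((g x * (L x)⁻¹) a p * L x p t) * (L x)⁻¹ q b) := by
                  apply sum_eq; intro p
                  rw [Finset.sum_mul, Finset.mul_sum, ← Finset.sum_neg_distrib]
                  exact sum_eq fun t => by ring
              _ = ∑ t, ∑ p, -(Christoffel g t c q x
                    * ((g x * (L x)⁻¹) a p * L x p t) * (L x)⁻¹ q b) := Finset.sum_comm
              _ = ∑ t, -(g x a t * (Christoffel g t c q x * (L x)⁻¹ q b)) := by
                  apply sum_eq; intro t
                  have h5 : ∑ p, -(Christoffel g t c q x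
                        * ((g x * (L x)⁻¹) a p * L x p t) * (L x)⁻¹ q b)
                      = -(Christoffel g t c q x
                          * (∑ p, (g x * (L x)⁻¹) a p * L x p t) * (L x)⁻¹ q b) := by
                    rw [Finset.mul_sum, Finset.sum_mul, ← Finset.sum_neg_distrib]
                  rw [h5, gMhelper2 hg hnd hx a t]
                  ring
        _ = -W := by
            rw [hW]
            simp only [Finset.sum_neg_distrib]
    rw [Sig1, Sig2, Sig3, Sig4]
    ring
  rw [step0, step1, Finset.sum_add_distrib, partA, partB]
  ring

end main6


section main7
open scoped Matrix
variable {n : ℕ} {U : Set (Fin n → ℝ)}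
  {g L : (Fin n → ℝ) → Matrix (Fin n) (Fin n) ℝ}

lemma ghat_inv_entry (hg : IsMetricOn g U) (hnd : ∀ x ∈ U, (L x).det ≠ 0)
    {x : Fin n → ℝ} (hx : x ∈ U) (i s : Fin n) :
    (g x * (L x)⁻¹)⁻¹ i s = ∑ p, L x i p * (g x)⁻¹ p s := by
  rw [ghat_inv hg hnd hx]
  exact Matrix.mul_apply

lemma hinvu (hg : IsMetricOn g U) (hgeo : GeodCompatOn g L U)
    (hnd : ∀ x ∈ U, (L x).det ≠ 0) {x : Fin n → ℝ} (hx : x ∈ U) (i : Fin n) :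
    ∑ s, (g x * (L x)⁻¹)⁻¹ i s * uvec L s x = lamSharp g L i x := by
  calc ∑ s, (g x * (L x)⁻¹)⁻¹ i s * uvec L s x
      = ∑ s, (∑ p, L x i p * (g x)⁻¹ p s) * uvec L s x :=
        sum_eq fun s => by rw [ghat_inv_entry hg hnd hx i s]
    _ = ∑ p, L x i p * (∑ s, (g x)⁻¹ p s * uvec L s x) := sum_swap_mul _ _ _
    _ = ∑ p, L x i p * (∑ t, pd (lamL L) t x * (∑ s, (L x)⁻¹ p s * (g x)⁻¹ s t)) := by
        apply sum_eq; intro p; congr 1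
        calc ∑ s, (g x)⁻¹ p s * uvec L s x
            = ∑ s, ∑ t, pd (lamL L) t x * ((g x)⁻¹ p s * (L x)⁻¹ t s) := by
              apply sum_eq; intro s
              rw [uvec, Finset.mul_sum]
              exact sum_eq fun t => by ring
          _ = ∑ t, ∑ s, pd (lamL L) t x * ((g x)⁻¹ p s * (L x)⁻¹ t s) := Finset.sum_comm
          _ = ∑ t, pd (lamL L) t x * (∑ s, (g x)⁻¹ p s * (L x)⁻¹ t s) :=
              sum_eq fun t => by rw [Finset.mul_sum]
          _ = ∑ t, pd (lamL L) t x * (∑ s, (L x)⁻¹ p s * (g x)⁻¹ s t) :=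
              sum_eq fun t => by rw [claimA hg hgeo hnd hx p t]
    _ = ∑ t, pd (lamL L) t x * (∑ s, (g x)⁻¹ s t * (∑ p, L x i p * (L x)⁻¹ p s)) := by
        calc ∑ p, L x i p * (∑ t, pd (lamL L) t x * (∑ s, (L x)⁻¹ p s * (g x)⁻¹ s t))
            = ∑ p, ∑ t, ∑ s, pd (lamL L) t x * ((g x)⁻¹ s t * (L x i p * (L x)⁻¹ p s)) := by
              apply sum_eq; intro p
              rw [Finset.mul_sum]
              apply sum_eq; intro t
              rw [Finset.mul_sum, Finset.mul_sum]
              exact sum_eq fun s => by ring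
          _ = ∑ t, ∑ p, ∑ s, pd (lamL L) t x * ((g x)⁻¹ s t * (L x i p * (L x)⁻¹ p s)) :=
              Finset.sum_comm
          _ = ∑ t, ∑ s, ∑ p, pd (lamL L) t x * ((g x)⁻¹ s t * (L x i p * (L x)⁻¹ p s)) :=
              sum_eq fun t => Finset.sum_comm
          _ = ∑ t, pd (lamL L) t x * (∑ s, (g x)⁻¹ s t * (∑ p, L x i p * (L x)⁻¹ p s)) := by
              apply sum_eq; intro t
              rw [Finset.mul_sum]
              apply sum_eq; intro s
              rw [Finset.mul_sum, Finset.mul_sum]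
    _ = lamSharp g L i x := by
        rw [lamSharp]
        have h1 : ∀ t, ∑ s, (g x)⁻¹ s t * (∑ p, L x i p * (L x)⁻¹ p s)
            = (g x)⁻¹ i t := by
          intro t
          calc ∑ s, (g x)⁻¹ s t * (∑ p, L x i p * (L x)⁻¹ p s)
              = ∑ s, (g x)⁻¹ s t * (if i = s then (1:ℝ) else 0) :=
                sum_eq fun s => by rw [LM hnd hx i s]
            _ = ∑ s, (if i = s then (1:ℝ) else 0) * (g x)⁻¹ s t :=
                sum_eq fun s => by ring
            _ = (g x)⁻¹ i t := sum_delta_mul _ i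
        calc ∑ t, pd (lamL L) t x * (∑ s, (g x)⁻¹ s t * (∑ p, L x i p * (L x)⁻¹ p s))
            = ∑ t, pd (lamL L) t x * (g x)⁻¹ i t := sum_eq fun t => by rw [h1 t]
          _ = ∑ s, (g x)⁻¹ i s * pd (lamL L) s x := sum_eq fun t => by ring

/-- `Γ̂^i_{jk} = Γ^i_{jk} - λ^i ĝ_{jk}`. -/
lemma Gammahat (hUo : IsOpen U) (hg : IsMetricOn g U) (hgeo : GeodCompatOn g L U)
    (hnd : ∀ x ∈ U, (L x).det ≠ 0) {x : Fin n → ℝ} (hx : x ∈ U) (i j k : Fin n) :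
    Christoffel (fun y => g y * (L y)⁻¹) i j k x
      = Christoffel g i j k x - lamSharp g L i x * (g x * (L x)⁻¹) j k := by
  have hP : ∀ s, pd (fun y => (g y * (L y)⁻¹) s k) j x
        + pd (fun y => (g y * (L y)⁻¹) s j) k x
        - pd (fun y => (g y * (L y)⁻¹) j k) s x
      = -(2 * (uvec L s x * (g x * (L x)⁻¹) j k))
        + 2 * ∑ t, Christoffel g t j k x * (g x * (L x)⁻¹) s t := by
    intro s
    rw [pd_ghat hUo hg hgeo hnd hx s k j, pd_ghat hUo hg hgeo hnd hx s j k,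
      pd_ghat hUo hg hgeo hnd hx j k s]
    have e1 : ∑ t, Christoffel g t s j x * (g x * (L x)⁻¹) t k
        = ∑ t, Christoffel g t j s x * (g x * (L x)⁻¹) t k :=
      sum_eq fun t => by rw [Gamma_sym hUo hg hx t s j]
    have e2 : ∑ t, Christoffel g t s k x * (g x * (L x)⁻¹) j t
        = ∑ t, Christoffel g t k s x * (g x * (L x)⁻¹) t j :=
      sum_eq fun t => by
        rw [Gamma_sym hUo hg hx t s k, ghat_sym_entry hg hgeo hnd hx j t]
    have e3 : ∑ t, Christoffel g t k j x * (g x * (L x)⁻¹) s t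
        = ∑ t, Christoffel g t j k x * (g x * (L x)⁻¹) s t :=
      sum_eq fun t => by rw [Gamma_sym hUo hg hx t k j]
    rw [e1, e2, e3, ghat_sym_entry hg hgeo hnd hx k j, ghat_sym_entry hg hgeo hnd hx s j,
      ghat_sym_entry hg hgeo hnd hx s k]
    ring
  have expand : Christoffel (fun y => g y * (L y)⁻¹) i j k x
      = (1/2) * ∑ s, (g x * (L x)⁻¹)⁻¹ i s *
          (pd (fun y => (g y * (L y)⁻¹) s k) j x + pd (fun y => (g y * (L y)⁻¹) s j) k x
            - pd (fun y => (g y * (L y)⁻¹) j k) s x) := rfl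
  rw [expand]
  calc (1/2) * ∑ s, (g x * (L x)⁻¹)⁻¹ i s *
          (pd (fun y => (g y * (L y)⁻¹) s k) j x + pd (fun y => (g y * (L y)⁻¹) s j) k x
            - pd (fun y => (g y * (L y)⁻¹) j k) s x)
      = ∑ s, (-((g x * (L x)⁻¹)⁻¹ i s * uvec L s x * (g x * (L x)⁻¹) j k)
          + (g x * (L x)⁻¹)⁻¹ i s * ∑ t, Christoffel g t j k x * (g x * (L x)⁻¹) s t) := by
        rw [Finset.mul_sum]
        apply sum_eq; intro s
        rw [hP s]
        ring
    _ = -((∑ s, (g x * (L x)⁻¹)⁻¹ i s * uvec L s x) * (g x * (L x)⁻¹) j k)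
        + ∑ s, (g x * (L x)⁻¹)⁻¹ i s * ∑ t, Christoffel g t j k x * (g x * (L x)⁻¹) s t := by
        rw [Finset.sum_add_distrib, Finset.sum_mul, ← Finset.sum_neg_distrib]
    _ = -(lamSharp g L i x * (g x * (L x)⁻¹) j k) + Christoffel g i j k x := by
        rw [hinvu hg hgeo hnd hx i]
        congr 1
        calc ∑ s, (g x * (L x)⁻¹)⁻¹ i s * ∑ t, Christoffel g t j k x * (g x * (L x)⁻¹) s t
            = ∑ s, ∑ t, Christoffel g t j k x
                * ((g x * (L x)⁻¹)⁻¹ i s * (g x * (L x)⁻¹) s t) := by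
              apply sum_eq; intro s
              rw [Finset.mul_sum]
              exact sum_eq fun t => by ring
          _ = ∑ t, ∑ s, Christoffel g t j k x
                * ((g x * (L x)⁻¹)⁻¹ i s * (g x * (L x)⁻¹) s t) := Finset.sum_comm
          _ = ∑ t, Christoffel g t j k x * (if i = t then (1:ℝ) else 0) := by
              apply sum_eq; intro t
              rw [← Finset.mul_sum, inv_mul_entry (ghat_det hg hnd hx) i t]
          _ = Christoffel g i j k x := by simp [mul_ite]
    _ = Christoffel g i j k x - lamSharp g L i x * (g x * (L x)⁻¹) j k := by ring

end main7


section main8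
open scoped Matrix
variable {n : ℕ} {U : Set (Fin n → ℝ)}
  {g L : (Fin n → ℝ) → Matrix (Fin n) (Fin n) ℝ}

/-- `R̂^l_{ijk} = -(∇_j λ^l) ĝ_{ik} + (∇_k λ^l) ĝ_{ij}`. -/
lemma Curv_ghat (hUo : IsOpen U) (hg : IsMetricOn g U) (hflat : IsFlatOn g U)
    (hgeo : GeodCompatOn g L U) (hnd : ∀ x ∈ U, (L x).det ≠ 0)
    {x : Fin n → ℝ} (hx : x ∈ U) (l i j k : Fin n) :
    Curv (fun y => g y * (L y)⁻¹) l i j k x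
      = -(HupL g L l j x * (g x * (L x)⁻¹) i k)
        + HupL g L l k x * (g x * (L x)⁻¹) i j := by
  have hD : ∀ a b c : Fin n, pd (Christoffel (fun y => g y * (L y)⁻¹) l a b) c x
      = pd (Christoffel g l a b) c x
        - (pd (lamSharp g L l) c x * (g x * (L x)⁻¹) a b
           + lamSharp g L l x * pd (fun y => (g y * (L y)⁻¹) a b) c x) := by
    intro a b c
    have h0 : pd (Christoffel (fun y => g y * (L y)⁻¹) l a b) c x
        = pd (fun y => Christoffel g l a b y
            - lamSharp g L l y * (g y * (L y)⁻¹) a b) c x :=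
      pd_congr hUo hx (fun y hy => Gammahat hUo hg hgeo hnd hy l a b) c
    rw [h0, pd_sub (cChristoffel hUo hg hx l a b).diffAt
      ((clamSharp hUo hg hgeo hx l).diffAt.fun_mul (cGhat hUo hg hgeo hnd hx a b).diffAt),
      pd_mul (clamSharp hUo hg hgeo hx l).diffAt (cGhat hUo hg hgeo hnd hx a b).diffAt]
  have hsplit : ∑ s, (Christoffel (fun y => g y * (L y)⁻¹) l j s x
        * Christoffel (fun y => g y * (L y)⁻¹) s i k x
        - Christoffel (fun y => g y * (L y)⁻¹) l k s x
          * Christoffel (fun y => g y * (L y)⁻¹) s i j x)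
      = (∑ s, (Christoffel g l j s x * Christoffel g s i k x
            - Christoffel g l k s x * Christoffel g s i j x))
        - (∑ s, Christoffel g l j s x * lamSharp g L s x) * (g x * (L x)⁻¹) i k
        - lamSharp g L l x * (∑ s, (g x * (L x)⁻¹) j s * Christoffel g s i k x)
        + lamSharp g L l x * ((∑ s, (g x * (L x)⁻¹) j s * lamSharp g L s x)
            * (g x * (L x)⁻¹) i k)
        + (∑ s, Christoffel g l k s x * lamSharp g L s x) * (g x * (L x)⁻¹) i j
        + lamSharp g L l x * (∑ s, (g x * (L x)⁻¹) k s * Christoffel g s i j x)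
        - lamSharp g L l x * ((∑ s, (g x * (L x)⁻¹) k s * lamSharp g L s x)
            * (g x * (L x)⁻¹) i j) := by
    have hF : ∀ s, Christoffel (fun y => g y * (L y)⁻¹) l j s x
          * Christoffel (fun y => g y * (L y)⁻¹) s i k x
          - Christoffel (fun y => g y * (L y)⁻¹) l k s x
            * Christoffel (fun y => g y * (L y)⁻¹) s i j x
        = (Christoffel g l j s x * Christoffel g s i k x
            - Christoffel g l k s x * Christoffel g s i j x)
          - (Christoffel g l j s x * lamSharp g L s x) * (g x * (L x)⁻¹) i k
          - lamSharp g L l x * ((g x * (L x)⁻¹) j s * Christoffel g s i k x)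
          + lamSharp g L l x * (((g x * (L x)⁻¹) j s * lamSharp g L s x)
              * (g x * (L x)⁻¹) i k)
          + (Christoffel g l k s x * lamSharp g L s x) * (g x * (L x)⁻¹) i j
          + lamSharp g L l x * ((g x * (L x)⁻¹) k s * Christoffel g s i j x)
          - lamSharp g L l x * (((g x * (L x)⁻¹) k s * lamSharp g L s x)
              * (g x * (L x)⁻¹) i j) := by
      intro s
      rw [Gammahat hUo hg hgeo hnd hx l j s, Gammahat hUo hg hgeo hnd hx s i k,
        Gammahat hUo hg hgeo hnd hx l k s, Gammahat hUo hg hgeo hnd hx s i j]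
      ring
    calc ∑ s, (Christoffel (fun y => g y * (L y)⁻¹) l j s x
          * Christoffel (fun y => g y * (L y)⁻¹) s i k x
          - Christoffel (fun y => g y * (L y)⁻¹) l k s x
            * Christoffel (fun y => g y * (L y)⁻¹) s i j x)
        = ∑ s, ((Christoffel g l j s x * Christoffel g s i k x
            - Christoffel g l k s x * Christoffel g s i j x)
          - (Christoffel g l j s x * lamSharp g L s x) * (g x * (L x)⁻¹) i k
          - lamSharp g L l x * ((g x * (L x)⁻¹) j s * Christoffel g s i k x)
          + lamSharp g L l x * (((g x * (L x)⁻¹) j s * lamSharp g L s x)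
              * (g x * (L x)⁻¹) i k)
          + (Christoffel g l k s x * lamSharp g L s x) * (g x * (L x)⁻¹) i j
          + lamSharp g L l x * ((g x * (L x)⁻¹) k s * Christoffel g s i j x)
          - lamSharp g L l x * (((g x * (L x)⁻¹) k s * lamSharp g L s x)
              * (g x * (L x)⁻¹) i j)) := sum_eq hF
      _ = _ := by
          simp only [Finset.sum_sub_distrib, Finset.sum_add_distrib, ← Finset.sum_mul,
            ← Finset.mul_sum]
  have expand : Curv (fun y => g y * (L y)⁻¹) l i j k x
      = pd (Christoffel (fun y => g y * (L y)⁻¹) l i k) j x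
        - pd (Christoffel (fun y => g y * (L y)⁻¹) l i j) k x
        + ∑ s, (Christoffel (fun y => g y * (L y)⁻¹) l j s x
            * Christoffel (fun y => g y * (L y)⁻¹) s i k x
          - Christoffel (fun y => g y * (L y)⁻¹) l k s x
            * Christoffel (fun y => g y * (L y)⁻¹) s i j x) := rfl
  have hCurvg : pd (Christoffel g l i k) j x - pd (Christoffel g l i j) k x
      + ∑ s, (Christoffel g l j s x * Christoffel g s i k x
          - Christoffel g l k s x * Christoffel g s i j x) = 0 := hflat x hx l i j k
  rw [expand, hD i k j, hD i j k, hsplit, pd_ghat hUo hg hgeo hnd hx i k j,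
    pd_ghat hUo hg hgeo hnd hx i j k]
  -- align atoms
  rw [uhat_eq hg hgeo hnd hx j, uhat_eq hg hgeo hnd hx k]
  have rB2 : ∑ s, (g x * (L x)⁻¹) k s * Christoffel g s i j x
      = ∑ t, Christoffel g t j i x * (g x * (L x)⁻¹) t k := by
    apply sum_eq; intro s
    rw [Gamma_sym hUo hg hx s i j, ghat_sym_entry hg hgeo hnd hx k s]
    ring
  have rA2 : ∑ s, (g x * (L x)⁻¹) j s * Christoffel g s i k x
      = ∑ t, Christoffel g t k i x * (g x * (L x)⁻¹) t j := by
    apply sum_eq; intro s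
    rw [Gamma_sym hUo hg hx s i k, ghat_sym_entry hg hgeo hnd hx j s]
    ring
  have rG4 : ∑ t, Christoffel g t k j x * (g x * (L x)⁻¹) i t
      = ∑ t, Christoffel g t j k x * (g x * (L x)⁻¹) i t :=
    sum_eq fun t => by rw [Gamma_sym hUo hg hx t k j]
  rw [rB2, rA2, rG4, ghat_sym_entry hg hgeo hnd hx k j]
  rw [HupL, HupL]
  linarith [hCurvg]

end main8


section main9
open scoped Matrix
variable {n : ℕ} {U : Set (Fin n → ℝ)}
  {g L : (Fin n → ℝ) → Matrix (Fin n) (Fin n) ℝ}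

lemma Hup_eq_ginv_Hess (hUo : IsOpen U) (hg : IsMetricOn g U) (hgeo : GeodCompatOn g L U)
    {x : Fin n → ℝ} (hx : x ∈ U) (l c : Fin n) :
    HupL g L l c x = ∑ p, (g x)⁻¹ l p * HessL g L c p x := by
  have step1 : pd (lamSharp g L l) c x
      = ∑ s, (pd (fun y => (g y)⁻¹ l s) c x * pd (lamL L) s x
          + (g x)⁻¹ l s * pd (pd (lamL L) s) c x) := by
    have h0 : lamSharp g L l = fun y => ∑ s, (g y)⁻¹ l s * pd (lamL L) s y := rfl
    rw [h0, pd_sum Finset.univ (fun s _ =>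
      ((cgi hUo hg hx l s).diffAt.fun_mul (cpdlam hUo hgeo hx s).diffAt)) c]
    exact sum_eq fun s =>
      pd_mul (cgi hUo hg hx l s).diffAt (cpdlam hUo hgeo hx s).diffAt c
  have step2 : ∑ s, pd (fun y => (g y)⁻¹ l s) c x * pd (lamL L) s x
      = -(∑ p, (g x)⁻¹ l p * (∑ s, Christoffel g s c p x * pd (lamL L) s x))
        - ∑ q, Christoffel g l c q x * lamSharp g L q x := by
    have h1 : ∀ s, pd (fun y => (g y)⁻¹ l s) c x * pd (lamL L) s x
        = (∑ p, -((g x)⁻¹ l p * (Christoffel g s c p x * pd (lamL L) s x)))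
          + ∑ q, -(Christoffel g l c q x * ((g x)⁻¹ q s * pd (lamL L) s x)) := by
      intro s
      rw [pd_ginv hUo hg hx l s c, sub_mul, neg_mul, Finset.sum_mul, Finset.sum_mul,
        ← Finset.sum_neg_distrib, sub_eq_add_neg, ← Finset.sum_neg_distrib]
      congr 1
      · exact sum_eq fun p => by ring
      · exact sum_eq fun q => by ring
    calc ∑ s, pd (fun y => (g y)⁻¹ l s) c x * pd (lamL L) s x
        = ∑ s, ((∑ p, -((g x)⁻¹ l p * (Christoffel g s c p x * pd (lamL L) s x)))
          + ∑ q, -(Christoffel g l c q x * ((g x)⁻¹ q s * pd (lamL L) s x))) := sum_eq h1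
      _ = (∑ s, ∑ p, -((g x)⁻¹ l p * (Christoffel g s c p x * pd (lamL L) s x)))
          + ∑ s, ∑ q, -(Christoffel g l c q x * ((g x)⁻¹ q s * pd (lamL L) s x)) :=
          Finset.sum_add_distrib
      _ = -(∑ p, (g x)⁻¹ l p * (∑ s, Christoffel g s c p x * pd (lamL L) s x))
          - ∑ q, Christoffel g l c q x * lamSharp g L q x := by
          rw [Finset.sum_comm (f := fun s p =>
            -((g x)⁻¹ l p * (Christoffel g s c p x * pd (lamL L) s x))),
            Finset.sum_comm (f := fun s q =>
            -(Christoffel g l c q x * ((g x)⁻¹ q s * pd (lamL L) s x)))]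
          rw [sub_eq_add_neg]
          congr 1
          · rw [← Finset.sum_neg_distrib]
            apply sum_eq; intro p
            rw [Finset.mul_sum, ← Finset.sum_neg_distrib]
          · rw [← Finset.sum_neg_distrib]
            apply sum_eq; intro q
            have : lamSharp g L q x = ∑ s, (g x)⁻¹ q s * pd (lamL L) s x := rfl
            rw [this, Finset.mul_sum, ← Finset.sum_neg_distrib]
  rw [HupL, step1, Finset.sum_add_distrib, step2]
  have final : ∑ s, (g x)⁻¹ l s * pd (pd (lamL L) s) c x
      - ∑ p, (g x)⁻¹ l p * (∑ s, Christoffel g s c p x * pd (lamL L) s x)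
      = ∑ p, (g x)⁻¹ l p * HessL g L c p x := by
    rw [← Finset.sum_sub_distrib]
    apply sum_eq; intro p
    rw [HessL, mul_sub]
  linarith [final]

lemma Hess_symm (hUo : IsOpen U) (hg : IsMetricOn g U) (hgeo : GeodCompatOn g L U)
    {x : Fin n → ℝ} (hx : x ∈ U) (c p : Fin n) :
    HessL g L c p x = HessL g L p c x := by
  rw [HessL, HessL, pd_comm (clam hUo hgeo hx) p c]
  congr 1
  exact sum_eq fun s => by rw [Gamma_sym hUo hg hx s c p]

theorem stmt4_core (hn : 2 ≤ n) (hUo : IsOpen U)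
    (hg : IsMetricOn g U) (hflat : IsFlatOn g U)
    (hgeo : GeodCompatOn g L U)
    (hnd : ∀ x ∈ U, (L x).det ≠ 0)
    (K : ℝ) (hK : HasConstCurvOn (fun x => g x * (L x)⁻¹) U K) :
    ∀ x ∈ U, ∀ i j : Fin n,
      (∑ s, (g x)⁻¹ i s *
          (pd (pd (lamL L) j) s x - ∑ r, Christoffel g r s j x * pd (lamL L) r x))
        + K * (if i = j then (1:ℝ) else 0) = 0 := by
  intro x hx i j
  -- first: HupL i k = -K δ_{ik}
  have hHup : ∀ i k : Fin n, HupL g L i k x = -(K * (if i = k then (1:ℝ) else 0)) := by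
    intro i k
    have hcard : 1 < Fintype.card (Fin n) := by rw [Fintype.card_fin]; omega
    obtain ⟨m, hm⟩ := Fintype.exists_ne_of_one_lt_card hcard k
    have h1 := hK x hx i m k m
    have h2 : ∑ s, ((fun x => g x * (L x)⁻¹) x)⁻¹ m s
        * Curv (fun x => g x * (L x)⁻¹) i s k m x
        = -(HupL g L i k x) * (if m = m then (1:ℝ) else 0)
          + HupL g L i m x * (if m = k then (1:ℝ) else 0) := by
      calc ∑ s, ((fun x => g x * (L x)⁻¹) x)⁻¹ m s
            * Curv (fun x => g x * (L x)⁻¹) i s k m x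
          = ∑ s, (-(HupL g L i k x) * ((g x * (L x)⁻¹)⁻¹ m s * (g x * (L x)⁻¹) s m)
              + HupL g L i m x * ((g x * (L x)⁻¹)⁻¹ m s * (g x * (L x)⁻¹) s k)) := by
            apply sum_eq; intro s
            rw [show ((fun x => g x * (L x)⁻¹) x)⁻¹ m s = (g x * (L x)⁻¹)⁻¹ m s from rfl,
              Curv_ghat hUo hg hflat hgeo hnd hx i s k m]
            ring
        _ = -(HupL g L i k x) * (∑ s, (g x * (L x)⁻¹)⁻¹ m s * (g x * (L x)⁻¹) s m)
            + HupL g L i m x * (∑ s, (g x * (L x)⁻¹)⁻¹ m s * (g x * (L x)⁻¹) s k) := by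
            rw [Finset.sum_add_distrib, Finset.mul_sum, Finset.mul_sum]
        _ = -(HupL g L i k x) * (if m = m then (1:ℝ) else 0)
            + HupL g L i m x * (if m = k then (1:ℝ) else 0) := by
            rw [inv_mul_entry (ghat_det hg hnd hx) m m,
              inv_mul_entry (ghat_det hg hnd hx) m k]
    rw [h2] at h1
    simp only [if_pos rfl, if_neg hm, ite_true, if_true, mul_zero, mul_one, add_zero, sub_zero] at h1
    linarith [h1]
  -- now assemble
  have key : ∑ s, (g x)⁻¹ i s *
      (pd (pd (lamL L) j) s x - ∑ r, Christoffel g r s j x * pd (lamL L) r x)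
      = HupL g L i j x := by
    calc ∑ s, (g x)⁻¹ i s *
        (pd (pd (lamL L) j) s x - ∑ r, Christoffel g r s j x * pd (lamL L) r x)
        = ∑ s, (g x)⁻¹ i s * HessL g L s j x := by
          apply sum_eq; intro s
          rw [HessL]
      _ = ∑ s, (g x)⁻¹ i s * HessL g L j s x :=
          sum_eq fun s => by rw [Hess_symm hUo hg hgeo hx s j]
      _ = HupL g L i j x := (Hup_eq_ginv_Hess hUo hg hgeo hx i j).symm
  rw [key, hHup i j]
  ring

end main9


/-- for flat `g` and geodesically compatible non-degenerate `L`,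
if `gL⁻¹` has constant curvature `K`, then `∇^i∇_j λ + K δ^i_j = 0`. -/
theorem stmt_4 {n : ℕ} (hn : 2 ≤ n) (U : Set (Fin n → ℝ)) (hUo : IsOpen U)
    (hUc : IsConnected U) (g L : (Fin n → ℝ) → Matrix (Fin n) (Fin n) ℝ)
    (hg : IsMetricOn g U) (hflat : IsFlatOn g U)
    (hgeo : GeodCompatOn g L U)
    (hnd : ∀ x ∈ U, (L x).det ≠ 0)
    (K : ℝ) (hK : HasConstCurvOn (fun x => g x * (L x)⁻¹) U K) :
    ∀ x ∈ U, ∀ i j : Fin n,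
      (∑ s, (g x)⁻¹ i s *
          (pd (pd (lamL L) j) s x - ∑ r, Christoffel g r s j x * pd (lamL L) r x))
        + K * (if i = j then (1:ℝ) else 0) = 0 := by
  exact stmt4_core hn hUo hg hflat hgeo hnd K hK
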